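/- arXiv:1103.1416 — 6 statements merged into one kernel-verified Lean document; each statement's English description precedes it below -/
import Mathlib

section
/- Let r_b ≥ 2, r_γ ≥ 1, let d be a positive integer, 0 < ε < 1, and let H be an r_γ-uniform hypergraph with Turán density zero. Then there exist constants K_1 = K_1(r_b, r_γ, d, ε, H) and K_2 = K_2(r_b, r_γ, d, ε, H) such that for every (r_b, r_γ)-uniform fiber bundle (B, γ, F) with dim_H(B, γ, F) < d and |γ(b)| ≥ ε·C(|F|, r_γ) for all b ∈ V(B): if |F| ≥ K_1, then χ(B) ≤ K_2. -/
open Finset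

/-- `A` embeds into `B` (i.e. `B` contains a copy of `A`). -/
def Embeds {α β : Type} [DecidableEq β] (A : Finset (Finset α)) (B : Finset (Finset β)) : Prop :=
  ∃ f : α → β, Function.Injective f ∧ ∀ e ∈ A, e.image f ∈ B

/-- The chromatic number of the hypergraph with edge set `A` is at most `K`. -/
def ChromAtMost {α : Type} (A : Finset (Finset α)) (K : ℕ) : Prop :=
  ∃ f : α → Fin K, ∀ e ∈ A, ∃ x ∈ e, ∃ y ∈ e, f x ≠ f y

/-- The Turán number `ex(N, H)` for `r`-uniform hypergraphs on `N` vertices. -/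
noncomputable def exNum {α : Type} (r : ℕ) (H : Finset (Finset α)) (N : ℕ) : ℕ :=
  sSup {c : ℕ | ∃ G : Finset (Finset (Fin N)),
    (∀ e ∈ G, e.card = r) ∧ ¬ Embeds H G ∧ G.card = c}

/-- The section of a set `X` of base vertices in the fiber bundle with fibers `γ`:
the hypergraph on `F` whose edges lie in every fiber over `X`. -/
def sectionOf {V F : Type} [Fintype F] [DecidableEq F]
    (γ : V → Finset (Finset F)) (X : Finset V) : Finset (Finset F) :=
  Finset.univ.filter (fun e => ∀ x ∈ X, e ∈ γ x)

/-- `dim_H(B, γ, F) ≥ d`: there are `d` pairwise disjoint edges of the base hypergraph `BE`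
such that every section of a transversal choice of vertices contains a copy of `H`. -/
def HasBundleDim {V F α : Type} [DecidableEq V] [Fintype F] [DecidableEq F]
    (BE : Finset (Finset V)) (γ : V → Finset (Finset F))
    (H : Finset (Finset α)) (d : ℕ) : Prop :=
  ∃ M : Finset (Finset V), M.card = d ∧ (∀ e ∈ M, e ∈ BE) ∧
    (∀ e₁ ∈ M, ∀ e₂ ∈ M, e₁ ≠ e₂ → Disjoint e₁ e₂) ∧
    ∀ sel : Finset V → V, (∀ e ∈ M, sel e ∈ e) →
      Embeds H (sectionOf γ (M.image sel))

/-! Put `C = C(|F|, r_γ)` and `α = ε / 2`; since `π(H) = 0`, once `|F|` is large every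
`r_γ`-graph on `F` with `α ^ d · C` edges contains `H`. Colour `B` recursively, carrying a set
`R` of fibre edges such that every vertex still to be coloured has density at most `α` in `R`;
then each fibre keeps `α · C` edges outside `R`. Take a maximal matching `M` of `B` all of whose
transversals have at least `α ^ |M| · C` section edges outside `R`: as `dim_H < d`, `|M| < d`,
so its vertex set `W` has at most `d · r_b` vertices. By maximality, every edge avoiding `W` has
a vertex of density at most `α` in the part outside `R` of the section of some `X ⊆ W`, a part
with at least `α ^ (d - 1) · C` edges. Colour `W` injectively, group the other vertices by such
an `X`, and recurse on each group with that part added to `R`. Since `R` grows by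
`α ^ (d - 1) · C` edges per round and never exceeds `C`, the recursion has bounded depth, each
round multiplying the number of colours by `d · r_b + 2 ^ (d · r_b)`. -/

lemma Embeds.mono {α β : Type} [DecidableEq β] {H : Finset (Finset α)}
    {A B : Finset (Finset β)} (h : Embeds H A) (hAB : A ⊆ B) : Embeds H B :=
  let ⟨f, hf, hA⟩ := h
  ⟨f, hf, fun e he => hAB (hA e he)⟩

section Coloring

variable {V : Type} {A B : Finset (Finset V)} {K L : ℕ}

lemma ChromAtMost.of_subset (h : ChromAtMost B K) (hAB : A ⊆ B) : ChromAtMost A K :=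
  let ⟨f, hf⟩ := h
  ⟨f, fun e he => hf e (hAB he)⟩

lemma ChromAtMost.mono (h : ChromAtMost A K) (hKL : K ≤ L) : ChromAtMost A L :=
  let ⟨f, hf⟩ := h
  ⟨fun x => Fin.castLE hKL (f x), fun e he =>
    let ⟨x, hx, y, hy, hxy⟩ := hf e he
    ⟨x, hx, y, hy, fun h => hxy (Fin.castLE_injective hKL h)⟩⟩

lemma chromAtMost_of_forall_not_mem (hK : 0 < K) (hA : ∀ e, e ∉ A) : ChromAtMost A K :=
  ⟨fun _ => ⟨0, hK⟩, fun e he => absurd he (hA e)⟩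

lemma chromAtMost_card_mul_of_classes {κ : Type} [Fintype κ] [DecidableEq κ]
    (hA : ∀ e ∈ A, e.Nonempty) (cls : V → κ)
    (h : ∀ k, ChromAtMost (A.filter fun e => ∀ x ∈ e, cls x = k) K) :
    ChromAtMost A (Fintype.card κ * K) := by
  choose g hg using h
  refine ⟨fun x => finProdFinEquiv (Fintype.equivFin κ (cls x), g (cls x) x), fun e he => ?_⟩
  obtain ⟨x₀, hx₀⟩ := hA e he
  by_cases hmono : ∀ x ∈ e, cls x = cls x₀
  · obtain ⟨x, hx, y, hy, hxy⟩ := hg (cls x₀) e (mem_filter.2 ⟨he, hmono⟩)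
    refine ⟨x, hx, y, hy, fun hEq => hxy ?_⟩
    have := congrArg Prod.snd (finProdFinEquiv.injective hEq)
    simpa only [hmono x hx, hmono y hy] using this
  · push Not at hmono
    obtain ⟨y, hy, hne⟩ := hmono
    refine ⟨y, hy, x₀, hx₀, fun hEq => hne ?_⟩
    exact (Fintype.equivFin κ).injective (congrArg Prod.fst (finProdFinEquiv.injective hEq))

/-- The colour classes are the singletons of `W` and, outside `W`, the fibres of `lab`; those
fibres are coloured separately. -/
lemma chromAtMost_of_labels [DecidableEq V] {W : Finset V} {c : ℕ} (hA : ∀ e ∈ A, 1 < e.card)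
    (lab : V → Finset V) (hlab : ∀ x, lab x ⊆ W)
    (hcover : ∀ e ∈ A, Disjoint e W → ∃ x ∈ e, (lab x).Nonempty) (hc : 0 < c)
    (hclass : ∀ X ⊆ W, X.Nonempty →
      ChromAtMost (A.filter fun e => ∀ x ∈ e, x ∉ W ∧ lab x = X) c) :
    ChromAtMost A ((W.card + 2 ^ W.card) * c) := by
  obtain ⟨S, hS⟩ : ∃ S : Finset (V ⊕ Finset V),
      S = W.image Sum.inl ∪ W.powerset.image Sum.inr := ⟨_, rfl⟩
  obtain ⟨cls, hcls⟩ : ∃ cls : V → S,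
      ∀ x, (cls x : V ⊕ Finset V) = if x ∈ W then Sum.inl x else Sum.inr (lab x) := by
    refine ⟨fun x => ⟨if x ∈ W then Sum.inl x else Sum.inr (lab x), ?_⟩, fun x => rfl⟩
    rw [hS]
    split_ifs with hx
    · exact mem_union_left _ (mem_image_of_mem _ hx)
    · exact mem_union_right _ (mem_image_of_mem _ (mem_powerset.2 (hlab x)))
  have hcard : Fintype.card S ≤ W.card + 2 ^ W.card := by
    rw [Fintype.card_coe, hS, ← card_powerset W]
    exact (card_union_le _ _).trans (add_le_add card_image_le card_image_le)
  refine (chromAtMost_card_mul_of_classes (fun e he => card_pos.1 (by linarith [hA e he])) cls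
    ?_).mono (Nat.mul_le_mul_right c hcard)
  rintro ⟨k, hk⟩
  rcases mem_union.1 (hS ▸ hk) with hk | hk
  · obtain ⟨w, -, rfl⟩ := mem_image.1 hk
    refine chromAtMost_of_forall_not_mem hc fun e he => ?_
    rw [mem_filter] at he
    have hw : ∀ z ∈ e, z = w := fun z hz => by
      have := hcls z ▸ congrArg Subtype.val (he.2 z hz)
      split_ifs at this; simp_all
    exact (hA e he.1).not_ge (card_le_one.2 fun x hx y hy => (hw x hx).trans (hw y hy).symm)
  · obtain ⟨X, hXW, rfl⟩ := mem_image.1 hk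
    have hclsX : ∀ x, (cls x : V ⊕ Finset V) = Sum.inr X → x ∉ W ∧ lab x = X := by
      intro x hx
      rw [hcls] at hx
      split_ifs at hx; simp_all
    rcases X.eq_empty_or_nonempty with rfl | hX
    · refine chromAtMost_of_forall_not_mem hc fun e he => ?_
      rw [mem_filter] at he
      have hlabe := fun z hz => hclsX z (congrArg Subtype.val (he.2 z hz))
      obtain ⟨x, hx, hlabx⟩ := hcover e he.1 (disjoint_left.2 fun z hz => (hlabe z hz).1)
      exact hlabx.ne_empty (hlabe x hx).2
    · refine (hclass X (mem_powerset.1 hXW) hX).of_subset fun e he => ?_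
      rw [mem_filter] at he ⊢
      exact ⟨he.1, fun x hx => hclsX x (congrArg Subtype.val (he.2 x hx))⟩

open Classical in
lemma chromAtMost_of_cover [DecidableEq V] {W : Finset V} {c : ℕ} (hA : ∀ e ∈ A, 1 < e.card)
    (P : Finset V → V → Prop)
    (hcover : ∀ e ∈ A, Disjoint e W → ∃ x ∈ e, ∃ X ⊆ W, X.Nonempty ∧ P X x)
    (hc : 0 < c)
    (hP : ∀ X ⊆ W, X.Nonempty → ChromAtMost (A.filter fun e => ∀ x ∈ e, P X x) c) :
    ChromAtMost A ((W.card + 2 ^ W.card) * c) := by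
  have hlab : ∀ x, ∃ X ⊆ W, (X.Nonempty → P X x) ∧
      ((∃ Y ⊆ W, Y.Nonempty ∧ P Y x) → X.Nonempty) := by
    intro x
    by_cases h : ∃ Y ⊆ W, Y.Nonempty ∧ P Y x
    · obtain ⟨Y, hYW, hY, hPY⟩ := h
      exact ⟨Y, hYW, fun _ => hPY, fun _ => hY⟩
    · exact ⟨∅, empty_subset _, fun h => absurd h not_nonempty_empty, fun h' => absurd h' h⟩
  choose lab hlabW hlabP hlabNe using hlab
  refine chromAtMost_of_labels hA lab hlabW (fun e he hdisj => ?_) hc fun X hXW hX =>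
    (hP X hXW hX).of_subset fun e he => ?_
  · obtain ⟨x, hx, Y, hYW, hY, hPY⟩ := hcover e he hdisj
    exact ⟨x, hx, hlabNe x ⟨Y, hYW, hY, hPY⟩⟩
  · rw [mem_filter] at he ⊢
    exact ⟨he.1, fun x hx => (he.2 x hx).2 ▸ hlabP x ((he.2 x hx).2 ▸ hX)⟩

end Coloring

section Sparse

variable {β : Type} [DecidableEq β] {α : ℝ} {A R S : Finset β}

def IsSparseIn (α : ℝ) (A S : Finset β) : Prop :=
  ((A ∩ S).card : ℝ) ≤ α * S.card

lemma IsSparseIn.union_sdiff (hR : IsSparseIn α A R) (hS : IsSparseIn α A (S \ R)) :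
    IsSparseIn α A (R ∪ S) := by
  unfold IsSparseIn at *
  rw [← union_sdiff_self_eq_union]
  calc ((A ∩ (R ∪ S \ R)).card : ℝ) ≤ (A ∩ R).card + (A ∩ (S \ R)).card := by
        rw [inter_union_distrib_left]; exact_mod_cast card_union_le _ _
    _ ≤ α * R.card + α * (S \ R).card := add_le_add hR hS
    _ = α * (R ∪ S \ R).card := by rw [card_union_of_disjoint disjoint_sdiff]; push_cast; ring

lemma le_card_sdiff_of_isSparseIn {N : ℝ} (hα : 0 ≤ α) (hR : (R.card : ℝ) ≤ N)
    (hA : 2 * α * N ≤ A.card) (hAR : IsSparseIn α A R) : α * N ≤ (A \ R).card := by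
  have : ((A \ R).card : ℝ) + (A ∩ R).card = A.card := by
    exact_mod_cast card_sdiff_add_card_inter A R
  unfold IsSparseIn at hAR
  nlinarith

lemma le_card_union_add {N δ : ℝ} {n : ℕ} (hS : δ ≤ (S \ R).card)
    (h : N ≤ R.card + (n + 1 : ℕ) * δ) : N ≤ (R ∪ S).card + n * δ := by
  rw [union_comm, ← card_sdiff_add_card]
  push_cast at h ⊢
  linarith

end Sparse

section Uniform

variable {F : Type} [Fintype F] {r : ℕ} {R : Finset (Finset F)}

lemma card_le_choose_of_forall_card_eq (hR : ∀ e ∈ R, e.card = r) :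
    R.card ≤ (Fintype.card F).choose r := by
  rw [← card_univ, ← card_powersetCard]
  exact card_le_card fun e he => mem_powersetCard.2 ⟨subset_univ e, hR e he⟩

lemma eq_powersetCard_of_choose_le_card (hR : ∀ e ∈ R, e.card = r)
    (hcard : (Fintype.card F).choose r ≤ R.card) : R = powersetCard r univ :=
  eq_of_subset_of_card_le (fun e he => mem_powersetCard.2 ⟨subset_univ e, hR e he⟩)
    (by rwa [card_powersetCard, card_univ])

lemma not_isSparseIn_of_choose_le_card [DecidableEq F] {α : ℝ} {A : Finset (Finset F)}
    (hα : 0 < α) (hr : r ≤ Fintype.card F) (hA : ∀ e ∈ A, e.card = r)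
    (hAcard : 2 * α * (Fintype.card F).choose r ≤ A.card) (hR : ∀ e ∈ R, e.card = r)
    (hRcard : (Fintype.card F).choose r ≤ R.card) : ¬ IsSparseIn α A R := fun hAR => by
  have hempty : A \ R = ∅ := sdiff_eq_empty_iff_subset.2 fun f hf =>
    eq_powersetCard_of_choose_le_card hR hRcard ▸ mem_powersetCard.2 ⟨subset_univ f, hA f hf⟩
  have := le_card_sdiff_of_isSparseIn hα.le
    (by exact_mod_cast card_le_choose_of_forall_card_eq hR) hAcard hAR
  rw [hempty, card_empty, Nat.cast_zero] at this
  exact (mul_pos hα (by exact_mod_cast Nat.choose_pos hr)).not_ge this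

end Uniform

section Sections

variable {V F : Type} [Fintype F] [DecidableEq F] {γ : V → Finset (Finset F)} {X : Finset V}

lemma mem_sectionOf {e : Finset F} : e ∈ sectionOf γ X ↔ ∀ x ∈ X, e ∈ γ x := by
  simp [sectionOf]

lemma sectionOf_subset {x : V} (hx : x ∈ X) : sectionOf γ X ⊆ γ x :=
  fun _ he => mem_sectionOf.1 he x hx

lemma sectionOf_singleton (x : V) : sectionOf γ {x} = γ x := by
  ext e
  simp [mem_sectionOf]

lemma sectionOf_insert [DecidableEq V] (x : V) :
    sectionOf γ (insert x X) = γ x ∩ sectionOf γ X := by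
  ext e
  simp [mem_sectionOf]

lemma card_eq_of_mem_sectionOf {r : ℕ} (hγ : ∀ b, ∀ e ∈ γ b, e.card = r)
    (hX : X.Nonempty) : ∀ e ∈ sectionOf γ X, e.card = r :=
  fun e he => hγ _ e (sectionOf_subset hX.choose_spec he)

end Sections

section DenseMatching

variable {V F ι : Type} [DecidableEq V] [Fintype F] [DecidableEq F]
  {BE : Finset (Finset V)} {γ : V → Finset (Finset F)} {r : ℕ} {α : ℝ}
  {R : Finset (Finset F)} {U : Finset V} {j : ℕ} {M : Finset (Finset V)} {e : Finset V}

structure IsDenseMatching (BE : Finset (Finset V)) (γ : V → Finset (Finset F)) (r : ℕ)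
    (α : ℝ) (R : Finset (Finset F)) (U : Finset V) (j : ℕ) (M : Finset (Finset V)) : Prop where
  card_eq : M.card = j
  mem : ∀ e ∈ M, e ∈ BE
  subset : ∀ e ∈ M, e ⊆ U
  pairwiseDisjoint : (M : Set (Finset V)).PairwiseDisjoint id
  le_card_sdiff : ∀ sel : Finset V → V, (∀ e ∈ M, sel e ∈ e) →
    α ^ j * (Fintype.card F).choose r ≤ (sectionOf γ (M.image sel) \ R).card

lemma isDenseMatching_singleton (hα : 0 ≤ α) (hR : ∀ e ∈ R, e.card = r)
    (hγ : ∀ b, 2 * α * (Fintype.card F).choose r ≤ (γ b).card)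
    (hU : ∀ x ∈ U, IsSparseIn α (γ x) R) (he : e ∈ BE) (heU : e ⊆ U) :
    IsDenseMatching BE γ r α R U 1 {e} where
  card_eq := card_singleton e
  mem := by simpa using he
  subset := by simpa using heU
  pairwiseDisjoint := by simp
  le_card_sdiff sel hsel := by
    rw [image_singleton, sectionOf_singleton, pow_one]
    exact le_card_sdiff_of_isSparseIn hα (mod_cast card_le_choose_of_forall_card_eq hR) (hγ _)
      (hU _ (heU (hsel e (mem_singleton_self e))))

lemma IsDenseMatching.hasBundleDim {H : Finset (Finset ι)} {d : ℕ}
    (hM : IsDenseMatching BE γ r α R U d M) (hd : 0 < d) (hγ : ∀ b, ∀ e ∈ γ b, e.card = r)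
    (hH : ∀ G : Finset (Finset F), (∀ e ∈ G, e.card = r) →
      α ^ d * (Fintype.card F).choose r ≤ G.card → Embeds H G) :
    HasBundleDim BE γ H d := by
  refine ⟨M, hM.card_eq, hM.mem, hM.pairwiseDisjoint, fun sel hsel => ?_⟩
  have hX : (M.image sel).Nonempty := (card_pos.1 (hM.card_eq ▸ hd)).image sel
  refine (hH _ (fun e he => ?_) (hM.le_card_sdiff sel hsel)).mono sdiff_subset
  exact card_eq_of_mem_sectionOf hγ hX e (mem_sdiff.1 he).1

lemma IsDenseMatching.insert (hM : IsDenseMatching BE γ r α R U j M) (he : e ∈ BE)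
    (heU : e ⊆ U) (hne : e.Nonempty) (hdisj : Disjoint e (M.biUnion id))
    (hsel : ∀ sel : Finset V → V, (∀ f ∈ M, sel f ∈ f) → sel e ∈ e →
      α ^ (j + 1) * (Fintype.card F).choose r ≤
        (γ (sel e) ∩ (sectionOf γ (M.image sel) \ R)).card) :
    IsDenseMatching BE γ r α R U (j + 1) (Insert.insert e M) := by
  have heM : e ∉ M := fun h =>
    hne.ne_empty (disjoint_self.1 (hdisj.mono_right (subset_biUnion_of_mem id h)))
  refine ⟨by rw [card_insert_of_notMem heM, hM.card_eq], ?_, ?_, ?_, fun sel hsel' => ?_⟩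
  · simpa [he] using hM.mem
  · simpa [heU] using hM.subset
  · rw [coe_insert]
    exact hM.pairwiseDisjoint.insert fun f hf _ =>
      hdisj.mono_right (subset_biUnion_of_mem id hf)
  · rw [image_insert, sectionOf_insert, inter_sdiff_assoc]
    exact hsel sel (fun f hf => hsel' f (mem_insert_of_mem hf)) (hsel' e (mem_insert_self e M))

lemma IsDenseMatching.exists_isSparseIn (hM : IsDenseMatching BE γ r α R U j M) (hj : 0 < j)
    (hα : 0 ≤ α) (he : e ∈ BE) (heU : e ⊆ U) (hne : e.Nonempty)
    (hdisj : Disjoint e (M.biUnion id))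
    (hmax : ¬ IsDenseMatching BE γ r α R U (j + 1) (Insert.insert e M)) :
    ∃ x ∈ e, ∃ X ⊆ M.biUnion id, X.Nonempty ∧
      α ^ j * (Fintype.card F).choose r ≤ (sectionOf γ X \ R).card ∧
      IsSparseIn α (γ x) (sectionOf γ X \ R) := by
  by_contra! h
  refine hmax (hM.insert he heU hne hdisj fun sel hsel hsele => ?_)
  have hX : M.image sel ⊆ M.biUnion id := fun x hx => by
    obtain ⟨f, hf, rfl⟩ := mem_image.1 hx
    exact subset_biUnion_of_mem id hf (hsel f hf)
  have hlarge := hM.le_card_sdiff sel hsel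
  have hdense := h (sel e) hsele _ hX ((card_pos.1 (hM.card_eq ▸ hj)).image sel) hlarge
  unfold IsSparseIn at hdense
  rw [pow_succ', mul_assoc]
  exact (mul_le_mul_of_nonneg_left hlarge hα).trans (not_le.1 hdense).le

end DenseMatching

section Induction

variable {V F ι : Type} [DecidableEq V] [Fintype F] [DecidableEq F]
  {BE : Finset (Finset V)} {γ : V → Finset (Finset F)} {H : Finset (Finset ι)}
  {rb r d : ℕ} {α : ℝ}

lemma exists_cover_isSparseIn (hBE : ∀ e ∈ BE, e.card = rb) (hrb : 0 < rb) (hd : 0 < d)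
    (hα : 0 < α) (hα₁ : α ≤ 1) (hγ : ∀ b, ∀ e ∈ γ b, e.card = r)
    (hγdense : ∀ b, 2 * α * (Fintype.card F).choose r ≤ (γ b).card)
    (hH : ∀ G : Finset (Finset F), (∀ e ∈ G, e.card = r) →
      α ^ d * (Fintype.card F).choose r ≤ G.card → Embeds H G)
    (hdim : ¬ HasBundleDim BE γ H d) {R : Finset (Finset F)} {U : Finset V}
    (hR : ∀ e ∈ R, e.card = r) (hU : ∀ x ∈ U, IsSparseIn α (γ x) R) :
    ∃ W : Finset V, W.card ≤ d * rb ∧ ∀ e ∈ BE, e ⊆ U → Disjoint e W →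
      ∃ x ∈ e, ∃ X ⊆ W, X.Nonempty ∧
        α ^ (d - 1) * (Fintype.card F).choose r ≤ (sectionOf γ X \ R).card ∧
        IsSparseIn α (γ x) (sectionOf γ X \ R) := by
  classical
  by_cases hedge : ∃ e ∈ BE, e ⊆ U
  swap
  · exact ⟨∅, by simp, fun e he heU _ => absurd ⟨e, he, heU⟩ hedge⟩
  obtain ⟨e₀, he₀, he₀U⟩ := hedge
  have hne : ∀ e ∈ BE, e.Nonempty := fun e he => card_pos.1 (hBE e he ▸ hrb)
  let P : ℕ → Prop := fun j => ∃ M, IsDenseMatching BE γ r α R U j M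
  have hP₁ : P 1 := ⟨_, isDenseMatching_singleton hα.le hR hγdense hU he₀ he₀U⟩
  obtain ⟨M, hM⟩ : P (Nat.findGreatest P d) := Nat.findGreatest_spec hd hP₁
  have hm₁ : 1 ≤ Nat.findGreatest P d := Nat.le_findGreatest hd hP₁
  have hmd : Nat.findGreatest P d < d := (Nat.findGreatest_le d).lt_of_ne fun h =>
    hdim ((h ▸ hM).hasBundleDim hd hγ hH)
  refine ⟨M.biUnion id, ?_, fun e he heU hdisj => ?_⟩
  · calc (M.biUnion id).card ≤ ∑ e ∈ M, e.card := card_biUnion_le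
      _ = Nat.findGreatest P d * rb := by
        rw [sum_congr rfl fun e he => hBE e (hM.mem e he), sum_const, hM.card_eq, smul_eq_mul]
      _ ≤ d * rb := Nat.mul_le_mul_right rb hmd.le
  obtain ⟨x, hx, X, hXW, hX, hlarge, hsparse⟩ := hM.exists_isSparseIn hm₁ hα.le he heU
    (hne e he) hdisj fun h => Nat.findGreatest_is_greatest (Nat.lt_succ_self _) hmd ⟨_, h⟩
  refine ⟨x, hx, X, hXW, hX, le_trans ?_ hlarge, hsparse⟩
  gcongr ?_ * _
  exact pow_le_pow_of_le_one hα.le hα₁ (by omega)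

theorem chromAtMost_of_isSparseIn (hBE : ∀ e ∈ BE, e.card = rb) (hrb : 2 ≤ rb) (hd : 0 < d)
    (hα : 0 < α) (hα₁ : α ≤ 1) (hr : r ≤ Fintype.card F)
    (hγ : ∀ b, ∀ e ∈ γ b, e.card = r)
    (hγdense : ∀ b, 2 * α * (Fintype.card F).choose r ≤ (γ b).card)
    (hH : ∀ G : Finset (Finset F), (∀ e ∈ G, e.card = r) →
      α ^ d * (Fintype.card F).choose r ≤ G.card → Embeds H G)
    (hdim : ¬ HasBundleDim BE γ H d) (n : ℕ) :
    ∀ (R : Finset (Finset F)) (U : Finset V), (∀ e ∈ R, e.card = r) →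
      (∀ x ∈ U, IsSparseIn α (γ x) R) →
      (Fintype.card F).choose r ≤ R.card + n * (α ^ (d - 1) * (Fintype.card F).choose r) →
      ChromAtMost (BE.filter (· ⊆ U)) ((d * rb + 2 ^ (d * rb)) ^ n) := by
  have hne : ∀ e ∈ BE, e.Nonempty := fun e he => card_pos.1 (by have := hBE e he; omega)
  induction n with
  | zero =>
    intro R U hR hU hRC
    refine chromAtMost_of_forall_not_mem one_pos fun e he => ?_
    obtain ⟨x, hx⟩ := hne e (mem_filter.1 he).1
    exact not_isSparseIn_of_choose_le_card hα hr (hγ x) (hγdense x) hR (by simpa using hRC)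
      (hU x ((mem_filter.1 he).2 hx))
  | succ n ih =>
    classical
    intro R U hR hU hRC
    obtain ⟨W, hW, hcover⟩ :=
      exists_cover_isSparseIn hBE (by omega) hd hα hα₁ hγ hγdense hH hdim hR hU
    refine (chromAtMost_of_cover (c := (d * rb + 2 ^ (d * rb)) ^ n)
      (fun e he => by have := hBE e (mem_filter.1 he).1; omega)
      (fun X x => α ^ (d - 1) * (Fintype.card F).choose r ≤ (sectionOf γ X \ R).card ∧
        IsSparseIn α (γ x) (sectionOf γ X \ R))
      (fun e he => hcover e (mem_filter.1 he).1 (mem_filter.1 he).2) (by positivity)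
      fun X _ hX => ?_).mono ?_
    · by_cases hthin : ∃ x ∈ U, α ^ (d - 1) * (Fintype.card F).choose r ≤
          (sectionOf γ X \ R).card ∧ IsSparseIn α (γ x) (sectionOf γ X \ R)
      · obtain ⟨-, -, hlarge, -⟩ := hthin
        refine (ih (R ∪ sectionOf γ X)
          (U.filter fun x => IsSparseIn α (γ x) (sectionOf γ X \ R))
          (fun f hf => ?_) (fun x hx => ?_) (le_card_union_add hlarge hRC)).of_subset
          fun e he => ?_
        · rcases mem_union.1 hf with hf | hf
          exacts [hR f hf, card_eq_of_mem_sectionOf hγ hX f hf]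
        · exact (hU x (mem_filter.1 hx).1).union_sdiff (mem_filter.1 hx).2
        · simp only [mem_filter] at he ⊢
          exact ⟨he.1.1, fun x hx => mem_filter.2 ⟨he.1.2 hx, (he.2 x hx).2⟩⟩
      · refine chromAtMost_of_forall_not_mem (by positivity) fun e he => hthin ?_
        simp only [mem_filter] at he
        obtain ⟨x, hx⟩ := hne e he.1.1
        exact ⟨x, he.1.2 hx, he.2 x hx⟩
    · rw [pow_succ']
      exact Nat.mul_le_mul_right _ (add_le_add hW (Nat.pow_le_pow_right two_pos hW))

end Induction

section Turan

open Filter Topology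

variable {ι : Type} {r : ℕ} {H : Finset (Finset ι)}

lemma card_le_exNum {N : ℕ} {G : Finset (Finset (Fin N))} (hG : ∀ e ∈ G, e.card = r)
    (hH : ¬ Embeds H G) : G.card ≤ exNum r H N :=
  le_csSup ⟨N.choose r, by
    rintro c ⟨G', hG', -, rfl⟩
    simpa using card_le_choose_of_forall_card_eq hG'⟩ ⟨G, hG, hH, rfl⟩

lemma eventually_embeds_of_tendsto_exNum
    (hπ : Tendsto (fun N : ℕ => (exNum r H N : ℝ) / N.choose r) atTop (𝓝 0)) {δ : ℝ}
    (hδ : 0 < δ) :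
    ∀ᶠ N in atTop, ∀ G : Finset (Finset (Fin N)), (∀ e ∈ G, e.card = r) →
      δ * N.choose r ≤ G.card → Embeds H G := by
  filter_upwards [hπ.eventually (gt_mem_nhds hδ), eventually_ge_atTop r] with N hN hrN G hG hδG
  by_contra hH
  rw [div_lt_iff₀ (by exact_mod_cast Nat.choose_pos hrN)] at hN
  have : (G.card : ℝ) ≤ exNum r H N := by exact_mod_cast card_le_exNum hG hH
  linarith

end Turan

theorem fiber_bundle_coloring_general
    (rb rγ d : ℕ) (hrb : 2 ≤ rb) (hd : 0 < d)
    (ε : ℝ) (hε0 : 0 < ε) (hε1 : ε < 1)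
    (mh : ℕ) (H : Finset (Finset (Fin mh)))
    (hπ : Filter.Tendsto (fun N : ℕ => (exNum rγ H N : ℝ) / (N.choose rγ : ℝ))
      Filter.atTop (nhds 0)) :
    ∃ K₁ K₂ : ℕ, ∀ (nb nf : ℕ) (BE : Finset (Finset (Fin nb)))
      (γ : Fin nb → Finset (Finset (Fin nf))),
      (∀ e ∈ BE, e.card = rb) →
      (∀ b : Fin nb, ∀ e ∈ γ b, e.card = rγ) →
      ¬ HasBundleDim BE γ H d →
      (∀ b : Fin nb, ε * (nf.choose rγ : ℝ) ≤ ((γ b).card : ℝ)) →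
      K₁ ≤ nf → ChromAtMost BE K₂ := by
  have hα : 0 < ε / 2 := half_pos hε0
  obtain ⟨K₁, hK₁⟩ := Filter.eventually_atTop.1 ((Filter.eventually_ge_atTop rγ).and
    (eventually_embeds_of_tendsto_exNum hπ (pow_pos hα d)))
  obtain ⟨D, hD⟩ := exists_nat_ge ((ε / 2) ^ (d - 1))⁻¹
  refine ⟨K₁, (d * rb + 2 ^ (d * rb)) ^ D, fun nb nf BE γ hBE hγ hdim hγdense hnf => ?_⟩
  obtain ⟨hr, hH⟩ := hK₁ nf hnf
  have hC : (0 : ℝ) ≤ nf.choose rγ := Nat.cast_nonneg _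
  have hR : (nf.choose rγ : ℝ) ≤ D * ((ε / 2) ^ (d - 1) * nf.choose rγ) := by
    rw [← mul_assoc]
    exact le_mul_of_one_le_left hC ((inv_le_iff_one_le_mul₀ (pow_pos hα _)).1 hD)
  have hcol := chromAtMost_of_isSparseIn hBE hrb hd hα (by linarith) (by simpa using hr) hγ
    (fun b => by rw [Fintype.card_fin]; linarith [hγdense b]) (by simpa using hH) hdim D ∅ univ
    (by simp) (by simp [IsSparseIn]) (by simpa using hR)
  rwa [filter_true_of_mem fun e _ => subset_univ e] at hcol

/-- Theorem: coloring fiber bundles of bounded dimension. If `H` is an `r_γ`-uniform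
hypergraph with Turán density zero, then there are constants `K₁, K₂` such that every
`(r_b, r_γ)`-uniform fiber bundle `(B, γ, F)` with `dim_H < d`, all fibers of size at least
`ε·C(|F|, r_γ)`, and `|F| ≥ K₁` satisfies `χ(B) ≤ K₂`. -/
theorem fiber_bundle_coloring
    (rb rγ d : ℕ) (hrb : 2 ≤ rb) (hrγ : 1 ≤ rγ) (hd : 0 < d)
    (ε : ℝ) (hε0 : 0 < ε) (hε1 : ε < 1)
    (mh : ℕ) (H : Finset (Finset (Fin mh))) (hH : ∀ e ∈ H, e.card = rγ)
    (hπ : Filter.Tendsto (fun N : ℕ => (exNum rγ H N : ℝ) / (N.choose rγ : ℝ))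
      Filter.atTop (nhds 0)) :
    ∃ K₁ K₂ : ℕ, ∀ (nb nf : ℕ) (BE : Finset (Finset (Fin nb)))
      (γ : Fin nb → Finset (Finset (Fin nf))),
      (∀ e ∈ BE, e.card = rb) →
      (∀ b : Fin nb, ∀ e ∈ γ b, e.card = rγ) →
      ¬ HasBundleDim BE γ H d →
      (∀ b : Fin nb, ε * (nf.choose rγ : ℝ) ≤ ((γ b).card : ℝ)) →
      K₁ ≤ nf → ChromAtMost BE K₂ :=
  fiber_bundle_coloring_general rb rγ d hrb hd ε hε0 hε1 mh H hπ
end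

section
/- For every r ≥ 5 and every k ≥ 1, the Turán density of the odd hypergraph cycle satisfies π(C^r_{2k+1}) > r!/r^r. -/
open Finset

/-- The Turán density of the `r`-uniform hypergraph `H` equals `p`. -/
def TuranDensityIs {α : Type} (r : ℕ) (H : Finset (Finset α)) (p : ℝ) : Prop :=
  Filter.Tendsto (fun N : ℕ => (exNum r H N : ℝ) / (N.choose r : ℝ)) Filter.atTop (nhds p)

/-- The `t`-th edge (0-indexed) of the hypergraph cycle `C^r_m` on `r·k + (r-1)` vertices
(arranged in a circle, identified with `ZMod (r·k + (r-1))`). -/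
def cycEdge (r k t : ℕ) : Finset (ZMod (r * k + (r - 1))) :=
  (Finset.range r).image
    (fun i => (((t / 2) * r + (if t % 2 = 1 then r - 1 else 0) + i : ℕ) : ZMod (r * k + (r - 1))))

/-- The odd hypergraph cycle `C^r_{2k+1}`. -/
def oddCycle (r k : ℕ) : Finset (Finset (ZMod (r * k + (r - 1)))) :=
  (Finset.range (2 * k + 1)).image (cycEdge r k)


def blk : List (List ℕ) := [[0, 1, 2, 3, 4], [0, 1, 2, 5, 8], [0, 1, 2, 6, 9], [0, 1, 2, 7, 10], [0, 1, 3, 5, 7], [0, 1, 3, 6, 10], [0, 1, 3, 8, 9], [0, 1, 4, 5, 6], [0, 1, 4, 7, 9], [0, 1, 4, 8, 10], [0, 1, 5, 9, 10], [0, 1, 6, 7, 8], [0, 2, 3, 5, 6], [0, 2, 3, 7, 8], [0, 2, 3, 9, 10], [0, 2, 4, 5, 10], [0, 2, 4, 6, 7], [0, 2, 4, 8, 9], [0, 2, 5, 7, 9], [0, 2, 6, 8, 10], [0, 3, 4, 5, 9], [0, 3, 4, 6, 8], [0, 3, 4, 7, 10], [0, 3, 5, 8, 10], [0, 3, 6,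 7, 9], [0, 4, 5, 7, 8], [0, 4, 6, 9, 10], [0, 5, 6, 7, 10], [0, 5, 6, 8, 9], [0, 7, 8, 9, 10], [1, 2, 3, 5, 9], [1, 2, 3, 6, 7], [1, 2, 3, 8, 10], [1, 2, 4, 5, 7], [1, 2, 4, 6, 8], [1, 2, 4, 9, 10], [1, 2, 5, 6, 10], [1, 2, 7, 8, 9], [1, 3, 4, 5, 10], [1, 3, 4, 6, 9], [1, 3, 4, 7, 8], [1, 3, 5, 6, 8], [1, 3, 7, 9, 10], [1, 4, 5, 8, 9], [1, 4, 6, 7, 10], [1, 5, 6, 7, 9], [1, 5, 7, 8, 10], [1, 6, 8, 9, 10], [2, 3, 4, 5, 8], [2, 3, 4, 6, 10], [2, 3, 4, 7, 9], [2, 3, 5, 7, 10], [2, 3, 6, 8, 9], [2, 4, 5, 6, 9], [2, 4, 7, 8, 10], [2, 5, 6, 7, 8], [2, 5, 8, 9, 10], [2, 6, 7, 9, 10], [3, 4, 5, 6, 7], [3, 4, 8, 9, 10], [3, 5, 6, 9, 10], [3, 5, 7, 8, 9], [3, 6, 7, 8, 10], [4, 5, 6, 8, 10], [4, 5, 7,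 9, 10], [4, 6, 7, 8, 9]]
/-- the blocks as finsets -/
def blkF (t : ℕ) : Finset ℕ := (blk.getD t []).toFinset

lemma blk_length : blk.length = 66 := by decide

lemma blk_basic : ∀ L ∈ blk, L.length = 5 ∧ L.Nodup ∧ ∀ x ∈ L, x < 11 := by decide

lemma blkL_lt : ∀ t < 66, ∀ j < 5, (blk.getD t []).getD j 0 < 11 := by decide

lemma blkL_inj : ∀ t < 66, ∀ j < 5, ∀ j' < 5,
    (blk.getD t []).getD j 0 = (blk.getD t []).getD j' 0 → j = j' := by decide

lemma blkL_mem : ∀ t < 66, ∀ j < 5, (blk.getD t []).getD j 0 ∈ blk.getD t [] := by decide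

lemma blkL_surj : ∀ t < 66, ∀ y ∈ blk.getD t [], ∃ j < 5, (blk.getD t []).getD j 0 = y := by
  decide

lemma blkF_card : ∀ t < 66, (blkF t).card = 5 := by decide
lemma blkF_lt : ∀ t < 66, ∀ x ∈ blkF t, x < 11 := by decide
lemma blkF_inter : ∀ s < 66, ∀ t < 66, s ≠ t → ((blkF s) ∩ (blkF t)).card ≤ 3 := by decide

def Qof (r t : ℕ) : Finset ℕ := Finset.range (r-5) ∪ (blkF t).image (fun x => x + (r-5))

def Qset (r : ℕ) : Finset (Finset ℕ) := (Finset.range 66).image (Qof r)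

lemma Qof_disj (r t : ℕ) : Disjoint (Finset.range (r-5)) ((blkF t).image (fun x => x + (r-5))) := by
  rw [Finset.disjoint_left]
  rintro a ha hb
  rw [Finset.mem_range] at ha
  rw [Finset.mem_image] at hb
  obtain ⟨x, -, rfl⟩ := hb
  omega

lemma Qof_card {r : ℕ} (hr : 5 ≤ r) {t : ℕ} (ht : t < 66) : (Qof r t).card = r := by
  rw [Qof, Finset.card_union_of_disjoint (Qof_disj r t),
    Finset.card_image_of_injective _ (add_left_injective _), Finset.card_range,
    blkF_card t ht]
  omega

lemma Qset_card {r : ℕ} (hr : 5 ≤ r) : ∀ q ∈ Qset r, q.card = r := by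
  intro q hq
  rw [Qset, Finset.mem_image] at hq
  obtain ⟨t, ht, rfl⟩ := hq
  exact Qof_card hr (Finset.mem_range.mp ht)

lemma Qof_inter {r s t : ℕ} (hr : 5 ≤ r) (hs : s < 66) (ht : t < 66) (hst : s ≠ t) :
    (Qof r s ∩ Qof r t).card ≤ r - 2 := by
  have heq : Qof r s ∩ Qof r t
      = Finset.range (r-5) ∪ ((blkF s) ∩ (blkF t)).image (fun x => x + (r-5)) := by
    rw [Finset.image_inter _ _ (add_left_injective _)]
    exact (Finset.union_inter_distrib_left (Finset.range (r-5)) _ _).symm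
  rw [heq, Finset.card_union_of_disjoint, Finset.card_range,
    Finset.card_image_of_injective _ (add_left_injective _)]
  · have := blkF_inter s hs t ht hst
    omega
  · exact Finset.disjoint_of_subset_right (Finset.image_subset_image inter_subset_left) (Qof_disj r s)

lemma Qset_design {r : ℕ} (hr : 5 ≤ r) :
    ∀ q ∈ Qset r, ∀ q' ∈ Qset r, r - 1 ≤ (q ∩ q').card → q = q' := by
  intro q hq q' hq' hcard
  rw [Qset, Finset.mem_image] at hq hq'
  obtain ⟨s, hs, rfl⟩ := hq
  obtain ⟨t, ht, rfl⟩ := hq'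
  rw [Finset.mem_range] at hs ht
  by_cases hst : s = t
  · subst hst; rfl
  · exact absurd hcard (by have := Qof_inter hr hs ht hst; omega)

def NV (r M : ℕ) : ℕ := 11 * r * M

def partF (r M : ℕ) (v : Fin (NV r M)) : ℕ :=
  if (v : ℕ) < (r-5)*(11*M) then (v : ℕ)/(11*M) else (r-5) + ((v : ℕ) - (r-5)*(11*M))/(5*M)

def GN (r M : ℕ) : Finset (Finset (Fin (NV r M))) :=
  Finset.univ.filter (fun e => e.card = r ∧ e.image (partF r M) ∈ Qset r)

lemma GN_same_part {r M : ℕ} (hr : 5 ≤ r) {B : Finset (Fin (NV r M))} {x y : Fin (NV r M)}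
    (hB : B.card = r - 1) (hx : x ∉ B) (hy : y ∉ B)
    (h1 : insert x B ∈ GN r M) (h2 : insert y B ∈ GN r M) :
    partF r M x = partF r M y := by
  rw [GN, Finset.mem_filter] at h1 h2
  obtain ⟨-, hc1, hq1⟩ := h1
  obtain ⟨-, hc2, hq2⟩ := h2
  have hinj1 : Set.InjOn (partF r M) (insert x B : Finset (Fin (NV r M))) := by
    apply Finset.injOn_of_card_image_eq
    rw [hc1, Qset_card hr _ hq1]
  have hinj2 : Set.InjOn (partF r M) (insert y B : Finset (Fin (NV r M))) := by
    apply Finset.injOn_of_card_image_eq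
    rw [hc2, Qset_card hr _ hq2]
  set S := B.image (partF r M) with hS
  have hpx : partF r M x ∉ S := by
    rw [hS]
    intro hmem
    rw [Finset.mem_image] at hmem
    obtain ⟨b, hb, hbe⟩ := hmem
    have hbx : b = x := hinj1 (Finset.mem_coe.mpr (Finset.mem_insert_of_mem hb))
      (Finset.mem_coe.mpr (Finset.mem_insert_self x B)) hbe
    exact hx (hbx ▸ hb)
  have hpy : partF r M y ∉ S := by
    rw [hS]
    intro hmem
    rw [Finset.mem_image] at hmem
    obtain ⟨b, hb, hbe⟩ := hmem
    have hby : b = y := hinj2 (Finset.mem_coe.mpr (Finset.mem_insert_of_mem hb))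
      (Finset.mem_coe.mpr (Finset.mem_insert_self y B)) hbe
    exact hy (hby ▸ hb)
  have hScard : S.card = r - 1 := by
    rw [hS, Finset.card_image_of_injOn (hinj1.mono (Finset.coe_subset.mpr (Finset.subset_insert x B))), hB]
  have hq1' : (insert x B).image (partF r M) = insert (partF r M x) S := by
    rw [Finset.image_insert, hS]
  have hq2' : (insert y B).image (partF r M) = insert (partF r M y) S := by
    rw [Finset.image_insert, hS]
  have hsub : S ⊆ ((insert x B).image (partF r M)) ∩ ((insert y B).image (partF r M)) := by
    rw [hq1', hq2']
    exact Finset.subset_inter (Finset.subset_insert _ _) (Finset.subset_insert _ _)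
  have hcard : r - 1 ≤ (((insert x B).image (partF r M)) ∩ ((insert y B).image (partF r M))).card := by
    rw [← hScard]; exact Finset.card_le_card hsub
  have hqeq := Qset_design hr _ hq1 _ hq2 hcard
  rw [hq1', hq2'] at hqeq
  have : partF r M x ∈ insert (partF r M y) S := by
    rw [← hqeq]; exact Finset.mem_insert_self _ _
  rcases Finset.mem_insert.mp this with h | h
  · exact h
  · exact absurd h hpx

section Cyc

variable (r k : ℕ)

/-- shorthand for natural number casts into the cycle's vertex set -/
def zc (m : ℕ) : ZMod (r * k + (r - 1)) := (m : ZMod (r * k + (r - 1)))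

/-- the common (r-1)-set of the two edges `E_{2j+1}`, `E_{2j+2}` -/
def Bz (j : ℕ) : Finset (ZMod (r * k + (r - 1))) :=
  (Finset.range (r-1)).image (fun i => zc r k ((j+1)*r + i))

lemma cyc_edge_odd {r k : ℕ} (hr : 5 ≤ r) (j : ℕ) :
    cycEdge r k (2*j+1) = insert (zc r k (j*r + (r-1))) (Bz r k j) := by
  have h2 : (2*j+1)/2 = j := by omega
  have h3 : ((2*j+1) % 2 = 1) = True := by simp [Nat.add_mul_mod_self_left]
  have hjr : (j+1)*r = j*r + r := by ring
  rw [cycEdge, Bz]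
  simp only [h2, h3, if_true]
  ext a
  simp only [Finset.mem_image, Finset.mem_insert, Finset.mem_range, zc]
  constructor
  · rintro ⟨i, hi, rfl⟩
    rcases Nat.eq_zero_or_pos i with h0 | h0
    · left; congr 1; omega
    · right; exact ⟨i-1, by omega, by congr 1; omega⟩
  · rintro (rfl | ⟨i, hi, rfl⟩)
    · exact ⟨0, by omega, by congr 1⟩
    · exact ⟨i+1, by omega, by congr 1; omega⟩

lemma cyc_edge_even {r k : ℕ} (hr : 5 ≤ r) (j : ℕ) :
    cycEdge r k (2*j+2) = insert (zc r k ((j+1)*r + (r-1))) (Bz r k j) := by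
  have h2 : (2*j+2)/2 = j+1 := by omega
  have h3 : ((2*j+2) % 2 = 1) = False := by
    simp only [eq_iff_iff, iff_false]
    omega
  rw [cycEdge, Bz]
  simp only [h2, h3, if_false, add_zero]
  ext a
  simp only [Finset.mem_image, Finset.mem_insert, Finset.mem_range, zc]
  constructor
  · rintro ⟨i, hi, rfl⟩
    rcases Nat.lt_or_ge i (r-1) with h0 | h0
    · right; exact ⟨i, h0, rfl⟩
    · left; congr 1; omega
  · rintro (rfl | ⟨i, hi, rfl⟩)
    · exact ⟨r-1, by omega, rfl⟩
    · exact ⟨i, by omega, rfl⟩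

lemma cyc_edge_zero {r k : ℕ} (hr : 5 ≤ r) :
    cycEdge r k 0 = (Finset.range r).image (fun i => zc r k i) := by
  have h3 : ((0:ℕ) % 2 = 1) = False := by
    simp only [eq_iff_iff, iff_false]
    omega
  rw [cycEdge]
  simp only [h3, if_false, add_zero, Nat.zero_div, zero_mul, zero_add]
  rfl

end Cyc

lemma GN_free {r k M : ℕ} (hr : 5 ≤ r) (hk : 1 ≤ k) : ¬ Embeds (oddCycle r k) (GN r M) := by
  rintro ⟨f, hfinj, hfmem⟩
  have hrk : r ≤ r * k := Nat.le_mul_of_pos_right r hk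
  have hkr : k * r = r * k := Nat.mul_comm _ _
  haveI : NeZero (r * k + (r - 1)) := ⟨by omega⟩
  have hci : ∀ a b : ℕ, a < r * k + (r - 1) → b < r * k + (r - 1) →
      zc r k a = zc r k b → a = b := by
    intro a b ha hb h
    have h2 := congrArg ZMod.val h
    rwa [zc, zc, ZMod.val_natCast_of_lt ha, ZMod.val_natCast_of_lt hb] at h2
  have hBmem : ∀ j i : ℕ, j < k → i < r - 1 → (j+1)*r + i < r * k + (r - 1) := by
    intro j i hj hi
    have h1 : (j+1)*r ≤ k*r := Nat.mul_le_mul_right r (by omega)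
    omega
  have hajn : ∀ j, j < k → j*r + (r-1) < r * k + (r - 1) := by
    intro j hj
    have h1 : (j+1)*r ≤ k*r := Nat.mul_le_mul_right r (by omega)
    have h2 : (j+1)*r = j*r + r := by ring
    omega
  have hBcard : ∀ j, j < k → (Bz r k j).card = r - 1 := by
    intro j hj
    rw [Bz, Finset.card_image_of_injOn, Finset.card_range]
    intro a ha b hb hab
    simp only [Finset.coe_range, Set.mem_Iio] at ha hb
    exact Nat.add_left_cancel (hci _ _ (hBmem j a hj ha) (hBmem j b hj hb) hab)
  have hxa : ∀ j, j < k → zc r k (j*r + (r-1)) ∉ Bz r k j := by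
    intro j hj hmem
    rw [Bz, Finset.mem_image] at hmem
    obtain ⟨i, hi, heq⟩ := hmem
    rw [Finset.mem_range] at hi
    have h3 := hci _ _ (hBmem j i hj hi) (hajn j hj) heq
    have h4 : (j+1)*r = j*r + r := by ring
    omega
  have hzn0 : zc r k (k*r + (r-1)) = zc r k 0 := by
    rw [zc, zc]
    have h5 : (k*r + (r-1) : ℕ) = r * k + (r - 1) := by omega
    rw [h5, ZMod.natCast_self, Nat.cast_zero]
  have hya : ∀ j, j < k → zc r k ((j+1)*r + (r-1)) ∉ Bz r k j := by
    intro j hj hmem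
    rw [Bz, Finset.mem_image] at hmem
    obtain ⟨i, hi, heq⟩ := hmem
    rw [Finset.mem_range] at hi
    rcases Nat.lt_or_ge (j+1) k with hjk | hjk
    · have h3 := hci _ _ (hBmem j i hj hi) (hajn (j+1) hjk) heq
      omega
    · have hkeq : j+1 = k := by omega
      rw [hkeq, hzn0] at heq
      have hlt : k*r + i < r * k + (r - 1) := by omega
      have h3 := hci _ _ hlt (by omega) heq
      omega
  have hedge : ∀ t, t < 2*k+1 → (cycEdge r k t).image f ∈ GN r M := by
    intro t ht
    exact hfmem _ (Finset.mem_image_of_mem _ (Finset.mem_range.mpr ht))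
  have key : ∀ j, j ≤ k → partF r M (f (zc r k (j*r + (r-1)))) = partF r M (f (zc r k (r-1))) := by
    intro j
    induction j with
    | zero => intro _; norm_num
    | succ j ih =>
      intro hj1
      have hj : j < k := by omega
      have h1 := hedge (2*j+1) (by omega)
      have h2 := hedge (2*j+2) (by omega)
      rw [cyc_edge_odd hr j, Finset.image_insert] at h1
      rw [cyc_edge_even hr j, Finset.image_insert] at h2
      have hBf : ((Bz r k j).image f).card = r - 1 := by
        rw [Finset.card_image_of_injective _ hfinj, hBcard j hj]
      have hfx : f (zc r k (j*r + (r-1))) ∉ (Bz r k j).image f := by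
        intro hmem
        rw [Finset.mem_image] at hmem
        obtain ⟨b, hb, hbe⟩ := hmem
        exact hxa j hj (hfinj hbe ▸ hb)
      have hfy : f (zc r k ((j+1)*r + (r-1))) ∉ (Bz r k j).image f := by
        intro hmem
        rw [Finset.mem_image] at hmem
        obtain ⟨b, hb, hbe⟩ := hmem
        exact hya j hj (hfinj hbe ▸ hb)
      have hsame := GN_same_part hr hBf hfx hfy h1 h2
      exact hsame.symm.trans (ih (by omega))
  have hk2 := key k le_rfl
  rw [hzn0] at hk2
  have h0 := hedge 0 (by omega)
  rw [cyc_edge_zero hr, GN, Finset.mem_filter] at h0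
  obtain ⟨-, hc0, hq0⟩ := h0
  have hinj0 : Set.InjOn (partF r M) ((((Finset.range r).image (fun i => zc r k i)).image f) : Finset (Fin (NV r M))) := by
    apply Finset.injOn_of_card_image_eq
    rw [hc0, Qset_card hr _ hq0]
  have hm0 : f (zc r k 0) ∈ ((Finset.range r).image (fun i => zc r k i)).image f :=
    Finset.mem_image_of_mem f (Finset.mem_image_of_mem _ (Finset.mem_range.mpr (by omega)))
  have hmr : f (zc r k (r-1)) ∈ ((Finset.range r).image (fun i => zc r k i)).image f :=
    Finset.mem_image_of_mem f (Finset.mem_image_of_mem _ (Finset.mem_range.mpr (by omega)))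
  have heqf : f (zc r k 0) = f (zc r k (r-1)) :=
    hinj0 (Finset.mem_coe.mpr hm0) (Finset.mem_coe.mpr hmr) hk2
  have : (0 : ℕ) = r - 1 := hci _ _ (by omega) (by omega) (hfinj heqf)
  omega

lemma Qof_inj {r s t : ℕ} (hr : 5 ≤ r) (hs : s < 66) (ht : t < 66) (h : Qof r s = Qof r t) :
    s = t := by
  by_contra hst
  have h1 := Qof_inter hr hs ht hst
  rw [h, Finset.inter_self, Qof_card hr ht] at h1
  omega

lemma blk_get_facts : ∀ t, t < 66 → (blk.getD t []).length = 5 ∧ (blk.getD t []).Nodup ∧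
    ∀ x ∈ (blk.getD t []), x < 11 := by
  intro t ht
  have hmem : blk.getD t [] ∈ blk := by
    rw [List.getD_eq_getElem blk [] (by rw [blk_length]; exact ht)]
    exact List.getElem_mem _
  exact blk_basic _ hmem

lemma GN_card_ge {r M : ℕ} (hr : 5 ≤ r) (hM : 1 ≤ M) :
    66 * (11*M)^(r-5) * (5*M)^5 ≤ (GN r M).card := by
  obtain ⟨d, rfl⟩ : ∃ d, r = d + 5 := ⟨r - 5, by omega⟩
  have hd5 : (d + 5) - 5 = d := by omega
  have hNVeq : NV (d+5) M = d*(11*M) + 55*M := by rw [NV]; ring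
  have hNV : 0 < NV (d+5) M := by rw [hNVeq]; omega
  -- the encoded vertex
  set Vc : ℕ → ℕ → Fin (NV (d+5) M) :=
    fun a s => ⟨(if a < d then a*(11*M) + s else d*(11*M) + (a-d)*(5*M) + s) % NV (d+5) M,
      Nat.mod_lt _ hNV⟩ with hVc
  have henc1 : ∀ a s : ℕ, a < d → s < 11*M → a*(11*M) + s < d*(11*M) := by
    intro a s ha hs
    calc a*(11*M) + s < a*(11*M) + 11*M := by omega
    _ = (a+1)*(11*M) := by ring
    _ ≤ d*(11*M) := Nat.mul_le_mul_right _ (by omega)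
  have henc2 : ∀ a s : ℕ, a < d + 11 → s < 5*M → d*(11*M) + (a-d)*(5*M) + s < NV (d+5) M := by
    intro a s ha hs
    have h1 : (a-d)*(5*M) ≤ 10*(5*M) := Nat.mul_le_mul_right _ (by omega)
    calc d*(11*M) + (a-d)*(5*M) + s ≤ d*(11*M) + 10*(5*M) + s := by omega
    _ < d*(11*M) + 55*M := by omega
    _ = NV (d+5) M := hNVeq.symm
  -- value of Vc
  have hval1 : ∀ a s : ℕ, a < d → s < 11*M → ((Vc a s : Fin (NV (d+5) M)) : ℕ) = a*(11*M) + s := by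
    intro a s ha hs
    rw [hVc]
    simp only [if_pos ha]
    exact Nat.mod_eq_of_lt (by
      have := henc1 a s ha hs
      rw [hNVeq]; omega)
  have hval2 : ∀ a s : ℕ, d ≤ a → a < d + 11 → s < 5*M →
      ((Vc a s : Fin (NV (d+5) M)) : ℕ) = d*(11*M) + (a-d)*(5*M) + s := by
    intro a s had ha hs
    rw [hVc]
    simp only [if_neg (by omega : ¬ a < d)]
    exact Nat.mod_eq_of_lt (henc2 a s ha hs)
  -- partF of Vc
  have hpart1 : ∀ a s : ℕ, a < d → s < 11*M → partF (d+5) M (Vc a s) = a := by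
    intro a s ha hs
    rw [partF, hval1 a s ha hs, hd5, if_pos (henc1 a s ha hs)]
    rw [mul_comm a (11*M), Nat.mul_add_div (by omega), Nat.div_eq_of_lt hs, add_zero]
  have hpart2 : ∀ a s : ℕ, d ≤ a → a < d + 11 → s < 5*M → partF (d+5) M (Vc a s) = a := by
    intro a s had ha hs
    rw [partF, hval2 a s had ha hs, hd5, if_neg (by omega)]
    rw [add_assoc, Nat.add_sub_cancel_left, mul_comm (a-d) (5*M), Nat.mul_add_div (by omega),
      Nat.div_eq_of_lt hs, add_zero]
    omega
  have hr5 : 5 ≤ d + 5 := by omega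
  -- block entry accessor
  set L : ℕ → Fin 5 → ℕ := fun t j => (blk.getD t []).getD (j : ℕ) 0 with hL
  have hLlt : ∀ t, t < 66 → ∀ j : Fin 5, L t j < 11 := by
    intro t ht j
    exact blkL_lt t ht (j : ℕ) j.isLt
  have hLinj : ∀ t, t < 66 → ∀ j j' : Fin 5, L t j = L t j' → j = j' := by
    intro t ht j j' hjj
    exact Fin.ext (blkL_inj t ht (j : ℕ) j.isLt (j' : ℕ) j'.isLt hjj)
  have hLmem : ∀ t, t < 66 → ∀ y : ℕ, y ∈ blkF t ↔ ∃ j : Fin 5, L t j = y := by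
    intro t ht y
    rw [blkF, List.mem_toFinset]
    constructor
    · intro hy
      obtain ⟨j, hj, hjy⟩ := blkL_surj t ht y hy
      exact ⟨⟨j, hj⟩, hjy⟩
    · rintro ⟨j, rfl⟩
      exact blkL_mem t ht (j : ℕ) j.isLt
  -- the transversal map
  set Φ : ℕ × (Fin d → ℕ) × (Fin 5 → ℕ) → Finset (Fin (NV (d+5) M)) :=
    fun x => (Finset.univ.image fun i : Fin d => Vc (i : ℕ) (x.2.1 i)) ∪
      (Finset.univ.image fun j : Fin 5 => Vc (L x.1 j + d) (x.2.2 j)) with hΦ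
  set T : Finset (ℕ × (Fin d → ℕ) × (Fin 5 → ℕ)) :=
    (Finset.range 66) ×ˢ ((Fintype.piFinset fun _ : Fin d => Finset.range (11*M)) ×ˢ
      (Fintype.piFinset fun _ : Fin 5 => Finset.range (5*M))) with hT
  have hTmem : ∀ x ∈ T, x.1 < 66 ∧ (∀ i, x.2.1 i < 11*M) ∧ (∀ j, x.2.2 j < 5*M) := by
    intro x hx
    rw [hT, Finset.mem_product, Finset.mem_product] at hx
    obtain ⟨h1, h2, h3⟩ := hx
    rw [Finset.mem_range] at h1
    refine ⟨h1, fun i => ?_, fun j => ?_⟩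
    · have := Fintype.mem_piFinset.mp h2 i
      rwa [Finset.mem_range] at this
    · have := Fintype.mem_piFinset.mp h3 j
      rwa [Finset.mem_range] at this
  have hTcard : T.card = 66 * ((11*M)^d * (5*M)^5) := by
    rw [hT, Finset.card_product, Finset.card_product, Finset.card_range,
      Fintype.card_piFinset, Fintype.card_piFinset]
    simp [Finset.card_range]
  -- part images
  have hQofd : ∀ t : ℕ, Qof (d+5) t = Finset.range d ∪ (blkF t).image (fun x => x + d) := by
    intro t
    rw [Qof, hd5]
  have hpartA : ∀ x, x ∈ T → ((Finset.univ.image fun i : Fin d => Vc (i : ℕ) (x.2.1 i)).image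
      (partF (d+5) M)) = Finset.range d := by
    intro x hx
    obtain ⟨ht, hσ, hτ⟩ := hTmem x hx
    rw [Finset.image_image]
    ext a
    simp only [Finset.mem_image, Finset.mem_univ, true_and, Function.comp, Finset.mem_range]
    constructor
    · rintro ⟨i, rfl⟩
      rw [hpart1 i (x.2.1 i) i.isLt (hσ i)]
      exact i.isLt
    · intro ha
      exact ⟨⟨a, ha⟩, hpart1 a (x.2.1 ⟨a, ha⟩) ha (hσ _)⟩
  have hpartB : ∀ x, x ∈ T → ((Finset.univ.image fun j : Fin 5 => Vc (L x.1 j + d) (x.2.2 j)).image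
      (partF (d+5) M)) = (blkF x.1).image (fun y => y + d) := by
    intro x hx
    obtain ⟨ht, hσ, hτ⟩ := hTmem x hx
    rw [Finset.image_image]
    ext a
    simp only [Finset.mem_image, Finset.mem_univ, true_and, Function.comp]
    constructor
    · rintro ⟨j, rfl⟩
      exact ⟨L x.1 j, (hLmem x.1 ht _).mpr ⟨j, rfl⟩,
        (hpart2 (L x.1 j + d) (x.2.2 j) (by omega) (by have := hLlt x.1 ht j; omega) (hτ j)).symm⟩
    · rintro ⟨y, hy, rfl⟩
      obtain ⟨j, rfl⟩ := (hLmem x.1 ht y).mp hy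
      exact ⟨j, hpart2 (L x.1 j + d) (x.2.2 j) (by omega) (by have := hLlt x.1 ht j; omega) (hτ j)⟩
  have hsub : ∀ x ∈ T, Φ x ∈ GN (d+5) M := by
    intro x hx
    obtain ⟨ht, hσ, hτ⟩ := hTmem x hx
    have hAinj : Function.Injective (fun i : Fin d => Vc (i : ℕ) (x.2.1 i)) := by
      intro i i' h
      have h2 := congrArg (partF (d+5) M) h
      simp only at h2
      rw [hpart1 i (x.2.1 i) i.isLt (hσ i), hpart1 i' (x.2.1 i') i'.isLt (hσ i')] at h2
      exact Fin.ext h2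
    have hBinj : Function.Injective (fun j : Fin 5 => Vc (L x.1 j + d) (x.2.2 j)) := by
      intro j j' h
      have h2 := congrArg (partF (d+5) M) h
      simp only at h2
      rw [hpart2 (L x.1 j + d) _ (by omega) (by have := hLlt x.1 ht j; omega) (hτ j),
        hpart2 (L x.1 j' + d) _ (by omega) (by have := hLlt x.1 ht j'; omega) (hτ j')] at h2
      exact hLinj x.1 ht j j' (by omega)
    have hdisj : Disjoint (Finset.univ.image fun i : Fin d => Vc (i : ℕ) (x.2.1 i))
        (Finset.univ.image fun j : Fin 5 => Vc (L x.1 j + d) (x.2.2 j)) := by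
      rw [Finset.disjoint_left]
      rintro a ha hb
      rw [Finset.mem_image] at ha hb
      obtain ⟨i, -, rfl⟩ := ha
      obtain ⟨j, -, hj⟩ := hb
      have h2 := congrArg (partF (d+5) M) hj
      rw [hpart1 i (x.2.1 i) i.isLt (hσ i),
        hpart2 (L x.1 j + d) _ (by omega) (by have := hLlt x.1 ht j; omega) (hτ j)] at h2
      have := i.isLt
      omega
    rw [GN, Finset.mem_filter]
    refine ⟨Finset.mem_univ _, ?_, ?_⟩
    · rw [hΦ]
      simp only
      rw [Finset.card_union_of_disjoint hdisj, Finset.card_image_of_injective _ hAinj,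
        Finset.card_image_of_injective _ hBinj, Finset.card_univ, Finset.card_univ]
      simp
    · rw [hΦ]
      simp only
      rw [Finset.image_union, hpartA x hx, hpartB x hx, ← hQofd]
      rw [Qset, Finset.mem_image]
      exact ⟨x.1, Finset.mem_range.mpr ht, rfl⟩
  have him : ∀ z ∈ T, (Φ z).image (partF (d+5) M) = Qof (d+5) z.1 := by
    intro z hz
    rw [hΦ]
    simp only
    rw [Finset.image_union, hpartA z hz, hpartB z hz, ← hQofd]
  have hinj : Set.InjOn Φ T := by
    intro x hx' y hy' hxy
    have hx : x ∈ T := hx'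
    have hy : y ∈ T := hy'
    obtain ⟨ht, hσ, hτ⟩ := hTmem x hx
    obtain ⟨hu, hσ', hτ'⟩ := hTmem y hy
    have himeq : Qof (d+5) x.1 = Qof (d+5) y.1 := by
      rw [← him x hx, ← him y hy, hxy]
    have hteq : x.1 = y.1 := Qof_inj hr5 ht hu himeq
    have hcomp1 : ∀ i : Fin d, x.2.1 i = y.2.1 i := by
      intro i
      have hmem1 : Vc (i : ℕ) (x.2.1 i) ∈ Φ x := by
        rw [hΦ]
        exact Finset.mem_union_left _ (Finset.mem_image_of_mem _ (Finset.mem_univ i))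
      rw [hxy, hΦ] at hmem1
      rcases Finset.mem_union.mp hmem1 with hA | hB
      · obtain ⟨i', -, hi'⟩ := Finset.mem_image.mp hA
        have hp := congrArg (partF (d+5) M) hi'
        rw [hpart1 _ _ i'.isLt (hσ' i'), hpart1 _ _ i.isLt (hσ i)] at hp
        have hii : i' = i := Fin.ext hp
        subst hii
        have hv := congrArg Fin.val hi'
        rw [hval1 _ _ i'.isLt (hσ' i'), hval1 _ _ i'.isLt (hσ i')] at hv
        omega
      · obtain ⟨j, -, hj⟩ := Finset.mem_image.mp hB
        have hp := congrArg (partF (d+5) M) hj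
        rw [hpart2 _ _ (by omega) (by have := hLlt y.1 hu j; omega) (hτ' j),
          hpart1 _ _ i.isLt (hσ i)] at hp
        have := i.isLt
        omega
    have hcomp2 : ∀ j : Fin 5, x.2.2 j = y.2.2 j := by
      intro j
      have hmem1 : Vc (L x.1 j + d) (x.2.2 j) ∈ Φ x := by
        rw [hΦ]
        exact Finset.mem_union_right _ (Finset.mem_image_of_mem _ (Finset.mem_univ j))
      rw [hxy, hΦ] at hmem1
      rcases Finset.mem_union.mp hmem1 with hA | hB
      · obtain ⟨i', -, hi'⟩ := Finset.mem_image.mp hA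
        have hp := congrArg (partF (d+5) M) hi'
        rw [hpart1 _ _ i'.isLt (hσ' i'),
          hpart2 _ _ (by omega) (by have := hLlt x.1 ht j; omega) (hτ j)] at hp
        have := i'.isLt
        omega
      · obtain ⟨j', -, hj'⟩ := Finset.mem_image.mp hB
        have hp := congrArg (partF (d+5) M) hj'
        rw [hpart2 _ _ (by omega) (by have := hLlt y.1 hu j'; omega) (hτ' j'),
          hpart2 _ _ (by omega) (by have := hLlt x.1 ht j; omega) (hτ j)] at hp
        rw [← hteq] at hp
        have hjj : j' = j := hLinj x.1 ht j' j (by omega)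
        subst hjj
        have hv := congrArg Fin.val hj'
        rw [hval2 _ _ (by omega) (by have := hLlt y.1 hu j'; omega) (hτ' j'),
          hval2 _ _ (by omega) (by have := hLlt x.1 ht j'; omega) (hτ j')] at hv
        rw [← hteq] at hv
        omega
    have h21 : x.2.1 = y.2.1 := funext hcomp1
    have h22 : x.2.2 = y.2.2 := funext hcomp2
    exact Prod.ext hteq (Prod.ext h21 h22)
  calc 66 * (11*M)^((d+5)-5) * (5*M)^5 = T.card := by rw [hTcard, hd5]; ring
  _ = (T.image Φ).card := (Finset.card_image_of_injOn hinj).symm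
  _ ≤ (GN (d+5) M).card := Finset.card_le_card (by
      intro e he
      rw [Finset.mem_image] at he
      obtain ⟨x, hx, rfl⟩ := he
      exact hsub x hx)

section ExNumFacts

variable {α : Type} {H : Finset (Finset α)} {r : ℕ}

/-- the defining set of `exNum` -/
def exSet (r : ℕ) (H : Finset (Finset α)) (N : ℕ) : Set ℕ :=
  {c : ℕ | ∃ G : Finset (Finset (Fin N)),
    (∀ e ∈ G, e.card = r) ∧ ¬ Embeds H G ∧ G.card = c}

lemma exNum_eq_sSup (N : ℕ) : exNum r H N = sSup (exSet r H N) := rfl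

lemma exSet_nonempty (hne : H.Nonempty) (N : ℕ) : (exSet r H N).Nonempty := by
  refine ⟨0, ∅, by simp, ?_, rfl⟩
  rintro ⟨f, hf, hmem⟩
  obtain ⟨e, he⟩ := hne
  simpa using hmem e he

lemma exSet_bdd (N : ℕ) : BddAbove (exSet r H N) := by
  refine ⟨Fintype.card (Finset (Fin N)), ?_⟩
  rintro c ⟨G, -, -, rfl⟩
  exact le_trans (Finset.card_le_univ G) (le_of_eq Finset.card_univ)

lemma le_exNum {N c : ℕ} (hc : c ∈ exSet r H N) : c ≤ exNum r H N :=
  le_csSup (exSet_bdd N) hc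

lemma exNum_mem (hne : H.Nonempty) (N : ℕ) : exNum r H N ∈ exSet r H N :=
  Nat.sSup_mem (exSet_nonempty hne N) (exSet_bdd N)

lemma exNum_step (hne : H.Nonempty) (N : ℕ) :
    (N + 1 - r) * exNum r H (N + 1) ≤ (N + 1) * exNum r H N := by
  obtain ⟨G, hGuni, hGfree, hGcard⟩ := exNum_mem (r := r) hne (N + 1)
  set Hv : Fin (N+1) → Finset (Finset (Fin N)) := fun v =>
    (Finset.univ : Finset (Finset (Fin N))).filter
      (fun e => e.map (Fin.succAboveEmb v) ∈ G) with hHv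
  have hHle : ∀ v, (Hv v).card ≤ exNum r H N := by
    intro v
    apply le_exNum
    refine ⟨Hv v, ?_, ?_, rfl⟩
    · intro e he
      rw [hHv, Finset.mem_filter] at he
      have := hGuni _ he.2
      rwa [Finset.card_map] at this
    · rintro ⟨f, hfi, hfm⟩
      apply hGfree
      refine ⟨(Fin.succAboveEmb v) ∘ f, (Fin.succAboveEmb v).injective.comp hfi, ?_⟩
      intro e he
      have h2 := hfm e he
      rw [hHv, Finset.mem_filter] at h2
      rw [← Finset.image_image, ← Finset.map_eq_image]
      exact h2.2
  have hHcard : ∀ v : Fin (N+1), (Hv v).card = (G.filter (fun e => v ∉ e)).card := by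
    intro v
    have himg : (Hv v).image (fun e => e.map (Fin.succAboveEmb v)) = G.filter (fun e => v ∉ e) := by
      ext e
      rw [Finset.mem_image]
      constructor
      · rintro ⟨e', he', rfl⟩
        rw [hHv, Finset.mem_filter] at he'
        rw [Finset.mem_filter]
        refine ⟨he'.2, ?_⟩
        rw [Finset.mem_map]
        rintro ⟨a, -, ha⟩
        exact Fin.succAbove_ne v a ha
      · intro he
        rw [Finset.mem_filter] at he
        obtain ⟨heG, hv⟩ := he
        have hinj : Set.InjOn v.succAbove (v.succAbove ⁻¹' e) :=
          Fin.succAbove_right_injective.injOn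
        refine ⟨e.preimage v.succAbove hinj, ?_, ?_⟩
        · rw [hHv, Finset.mem_filter]
          refine ⟨Finset.mem_univ _, ?_⟩
          rw [Finset.map_eq_image]
          have : Finset.image (⇑(Fin.succAboveEmb v)) (e.preimage v.succAbove hinj) = e := by
            rw [Fin.coe_succAboveEmb, Finset.image_preimage]
            apply Finset.filter_true_of_mem
            intro x hx
            have hxv : x ≠ v := by rintro rfl; exact hv hx
            obtain ⟨y, hy⟩ := Fin.exists_succAbove_eq hxv
            exact ⟨y, hy⟩
          rw [this]
          exact heG
        · rw [Finset.map_eq_image, Fin.coe_succAboveEmb, Finset.image_preimage]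
          apply Finset.filter_true_of_mem
          intro x hx
          have hxv : x ≠ v := by rintro rfl; exact hv hx
          obtain ⟨y, hy⟩ := Fin.exists_succAbove_eq hxv
          exact ⟨y, hy⟩
    rw [← himg]
    exact (Finset.card_image_of_injective _ (Finset.map_injective _)).symm
  have hsum : ∑ v : Fin (N+1), (G.filter (fun e => v ∉ e)).card = G.card * (N + 1 - r) := by
    have h1 : ∀ v : Fin (N+1), (G.filter (fun e => v ∉ e)).card
        = ∑ e ∈ G, (if v ∉ e then 1 else 0) := by
      intro v
      rw [Finset.card_filter]
    rw [Finset.sum_congr rfl (fun v _ => h1 v), Finset.sum_comm]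
    have h2 : ∀ e ∈ G, ∑ v : Fin (N+1), (if v ∉ e then 1 else 0) = N + 1 - r := by
      intro e he
      rw [← Finset.card_filter]
      have hcompl : Finset.univ.filter (fun v => v ∉ e) = eᶜ := by
        ext v
        simp [Finset.mem_compl]
      rw [hcompl, Finset.card_compl, Fintype.card_fin, hGuni e he]
    rw [Finset.sum_congr rfl h2, Finset.sum_const, smul_eq_mul]
  have hfinal : G.card * (N + 1 - r) ≤ (N+1) * exNum r H N := by
    rw [← hsum]
    calc ∑ v : Fin (N+1), (G.filter (fun e => v ∉ e)).card
        = ∑ v : Fin (N+1), (Hv v).card := by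
          exact Finset.sum_congr rfl (fun v _ => (hHcard v).symm)
    _ ≤ ∑ _v : Fin (N+1), exNum r H N := Finset.sum_le_sum (fun v _ => hHle v)
    _ = (N+1) * exNum r H N := by
          rw [Finset.sum_const, Finset.card_univ, Fintype.card_fin, smul_eq_mul]
  calc (N + 1 - r) * exNum r H (N + 1) = G.card * (N + 1 - r) := by rw [hGcard]; ring
  _ ≤ (N+1) * exNum r H N := hfinal

end ExNumFacts

lemma exNum_construction {r k M : ℕ} (hr : 5 ≤ r) (hk : 1 ≤ k) (hM : 1 ≤ M) :
    206250 * (r.factorial * ((NV r M).choose r)) ≤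
      161051 * r^r * exNum r (oddCycle r k) (NV r M) := by
  have hEx : 66 * (11*M)^(r-5) * (5*M)^5 ≤ exNum r (oddCycle r k) (NV r M) := by
    refine le_trans (GN_card_ge hr hM) (le_exNum ⟨GN r M, ?_, GN_free hr hk, rfl⟩)
    intro e he
    exact (Finset.mem_filter.mp he).2.1
  have hDF : r.factorial * ((NV r M).choose r) ≤ (NV r M)^r := by
    rw [← Nat.descFactorial_eq_factorial_mul_choose]
    exact Nat.descFactorial_le_pow _ _
  have hID : 206250 * (NV r M)^r = 161051 * r^r * (66 * (11*M)^(r-5) * (5*M)^5) := by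
    obtain ⟨d, rfl⟩ : ∃ d, r = d + 5 := ⟨r-5, by omega⟩
    rw [NV, show (d+5)-5 = d from by omega]
    have h1 : (11*(d+5)*M)^(d+5) = 11^(d+5) * (d+5)^(d+5) * M^(d+5) := by
      rw [mul_pow, mul_pow]
    have h2 : (11:ℕ)^(d+5) = 11^d * 161051 := by rw [pow_add]; norm_num
    have h3 : (M:ℕ)^(d+5) = M^d * M^5 := pow_add M d 5
    have h4 : (11*M)^d = 11^d * M^d := mul_pow _ _ _
    have h5 : (5*M)^5 = 3125 * M^5 := by rw [mul_pow]; norm_num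
    rw [h1, h2, h3, h4, h5]
    ring
  calc 206250 * (r.factorial * ((NV r M).choose r)) ≤ 206250 * (NV r M)^r :=
        Nat.mul_le_mul_left _ hDF
  _ = 161051 * r^r * (66 * (11*M)^(r-5) * (5*M)^5) := hID
  _ ≤ 161051 * r^r * exNum r (oddCycle r k) (NV r M) := Nat.mul_le_mul_left _ hEx

lemma ratio_step {α : Type} {H : Finset (Finset α)} (hne : H.Nonempty) {r N : ℕ} (hrN : r ≤ N) :
    (exNum r H (N+1) : ℝ) / ((N+1).choose r : ℝ) ≤ (exNum r H N : ℝ) / (N.choose r : ℝ) := by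
  have hC : 0 < N.choose r := Nat.choose_pos hrN
  have hC' : 0 < (N+1).choose r := Nat.choose_pos (by omega)
  rw [div_le_div_iff₀ (by exact_mod_cast hC') (by exact_mod_cast hC)]
  have hNat : exNum r H (N+1) * (N.choose r) * (N+1) ≤ exNum r H N * ((N+1).choose r) * (N+1) := by
    calc exNum r H (N+1) * (N.choose r) * (N+1)
        = ((N+1-r) * exNum r H (N+1)) * ((N+1).choose r) := by
          rw [mul_assoc, Nat.choose_mul_succ_eq]
          ring
    _ ≤ ((N+1) * exNum r H N) * ((N+1).choose r) :=
          Nat.mul_le_mul_right _ (exNum_step hne N)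
    _ = exNum r H N * ((N+1).choose r) * (N+1) := by ring
  have := Nat.le_of_mul_le_mul_right (by
    calc exNum r H (N+1) * (N.choose r) * (N+1) ≤ exNum r H N * ((N+1).choose r) * (N+1) := hNat)
    (by omega : 0 < N+1)
  exact_mod_cast this

theorem odd_cycle_turan_density_large' (r k : ℕ) (hr : 5 ≤ r) (hk : 1 ≤ k) :
    ∃ p : ℝ, TuranDensityIs r (oddCycle r k) p ∧ (r.factorial : ℝ) / (r : ℝ) ^ r < p := by
  have hne : (oddCycle r k).Nonempty :=
    ⟨cycEdge r k 0, Finset.mem_image_of_mem _ (Finset.mem_range.mpr (by omega))⟩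
  set a : ℕ → ℝ := fun N => (exNum r (oddCycle r k) N : ℝ) / (N.choose r : ℝ) with ha
  have hstep : ∀ N, r ≤ N → a (N+1) ≤ a N := fun N hN => ratio_step hne hN
  have hmono : ∀ m n, r ≤ m → m ≤ n → a n ≤ a m := by
    intro m n hm hmn
    induction n, hmn using Nat.le_induction with
    | base => exact le_refl _
    | succ n hmn ih => exact le_trans (hstep n (le_trans hm hmn)) ih
  have hanti : Antitone (fun j : ℕ => a (j + r)) := by
    apply antitone_nat_of_succ_le
    intro j
    have := hstep (j + r) (by omega)
    simpa [add_assoc, add_comm, add_left_comm] using this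
  have hnn : ∀ N, 0 ≤ a N := by
    intro N
    rw [ha]
    positivity
  have hbdd : BddBelow (Set.range fun j : ℕ => a (j + r)) := by
    refine ⟨0, ?_⟩
    rintro x ⟨j, rfl⟩
    exact hnn _
  set p := ⨅ j : ℕ, a (j + r) with hp
  have htend : Filter.Tendsto (fun j => a (j + r)) Filter.atTop (nhds p) :=
    tendsto_atTop_ciInf hanti hbdd
  have htend2 : Filter.Tendsto a Filter.atTop (nhds p) :=
    (Filter.tendsto_add_atTop_iff_nat r).mp htend
  set c : ℝ := 206250 * (r.factorial : ℝ) / (161051 * (r:ℝ)^r) with hc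
  have hrr : (0:ℝ) < (r:ℝ)^r := by positivity
  have hcle : ∀ j : ℕ, c ≤ a (j + r) := by
    intro j
    set M := j + r with hM
    have hM1 : 1 ≤ M := by omega
    have hNV1 : j + r ≤ NV r M := by
      rw [NV, hM]
      calc j + r ≤ 11 * (j + r) := by omega
      _ ≤ 11 * r * (j + r) := by
          have : 11 ≤ 11 * r := by omega
          exact Nat.mul_le_mul_right _ this
    have hbound : c ≤ a (NV r M) := by
      have hNat := exNum_construction (k := k) hr hk hM1
      have hCpos : 0 < (NV r M).choose r := Nat.choose_pos (le_trans (by omega) hNV1)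
      rw [ha, hc]
      rw [div_le_div_iff₀ (by positivity) (by exact_mod_cast hCpos)]
      have hcast : (206250:ℝ) * ((r.factorial : ℝ) * ((NV r M).choose r : ℝ)) ≤
          161051 * (r:ℝ)^r * (exNum r (oddCycle r k) (NV r M) : ℝ) := by
        exact_mod_cast hNat
      nlinarith [hcast]
    exact le_trans hbound (hmono (j + r) (NV r M) (by omega) hNV1)
  have hcp : c ≤ p := le_ciInf hcle
  refine ⟨p, htend2, ?_⟩
  have hfac : (0:ℝ) < (r.factorial : ℝ) := by
    exact_mod_cast Nat.factorial_pos r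
  have hlt : (r.factorial : ℝ) / (r : ℝ) ^ r < c := by
    rw [hc, div_lt_div_iff₀ hrr (by positivity)]
    nlinarith [mul_pos hfac hrr]
  linarith

/-- Lemma: for `r ≥ 5` and `k ≥ 1`, the Turán density of the odd cycle `C^r_{2k+1}`
is strictly greater than `r!/r^r`. -/
theorem odd_cycle_turan_density_large (r k : ℕ) (hr : 5 ≤ r) (hk : 1 ≤ k) :
    ∃ p : ℝ, TuranDensityIs r (oddCycle r k) p ∧ (r.factorial : ℝ) / (r : ℝ) ^ r < p :=
  odd_cycle_turan_density_large' r k hr hk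
end

section
/- If G is a triangle-free simple graph with n vertices and m edges, then G has at least m − n/2 good non-edges, where a non-edge {u,v} (u ≠ v, uv ∉ E(G)) is good if N(u) ∩ N(v) ≠ ∅. -/
/-!
Fix a maximal matching, viewed as the involution `f` exchanging matched partners, and count the
`2m` darts (ordered pairs of adjacent vertices). A dart along the matching is determined by its
tail, so there are at most `n` of them. Every other dart `(u, v)` goes to `(u, f v)` if `v` is
matched, and to `(f u, v)` otherwise (then `u` is matched, by maximality). The two entries of the
image have the common neighbour `v`, resp. `u`, and differ, so by triangle-freeness they form a
good non-edge. This shift is an involution of `V × V`, hence injective, and a good non-edge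
has two orderings, so `2m ≤ n + 2 · #(good non-edges)`.
-/

open Finset

lemma Finset.card_filter_pair_mem_le_sum_card {α : Type*} [Fintype α] [DecidableEq α]
    (s : Finset (Finset α)) : #{q : α × α | {q.1, q.2} ∈ s} ≤ ∑ P ∈ s, #P := by
  rw [← card_sigma]
  refine card_le_card_of_injOn (fun q => (⟨{q.1, q.2}, q.1⟩ : Σ _ : Finset α, α)) ?_ ?_
  · intro q hq
    simp_all
  · rintro ⟨a, b⟩ - ⟨a', b'⟩ - h
    simp only [Sigma.mk.injEq, heq_eq_eq] at h
    obtain ⟨hpair, rfl⟩ := h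
    have hb : b ∈ ({a, b'} : Finset α) := hpair ▸ mem_insert_of_mem (mem_singleton_self b)
    have hb' : b' ∈ ({a, b} : Finset α) := hpair ▸ mem_insert_of_mem (mem_singleton_self b')
    simp only [mem_insert, mem_singleton] at hb hb'
    grind

lemma Function.Involutive.swap_apply_of_ne_of_ne {α : Type*} [DecidableEq α] {f : α → α}
    (hf : Function.Involutive f) {x y v : α} (hx : f x = x) (hy : f y = y) (hvx : v ≠ x)
    (hvy : v ≠ y) : Equiv.swap x y (f v) = f v :=
  Equiv.swap_apply_of_ne_of_ne (fun h => hvx (by rw [← hf v, h, hx]))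
    (fun h => hvy (by rw [← hf v, h, hy]))

lemma Function.Involutive.setOf_ne_ssubset_setOf_swap_comp_ne {α : Type*} [DecidableEq α]
    {f : α → α} (hf : Function.Involutive f) {x y : α} (hxy : x ≠ y) (hx : f x = x) (hy : f y = y) :
    {v | f v ≠ v} ⊂ {v | (Equiv.swap x y ∘ f) v ≠ v} := by
  refine Set.ssubset_iff_of_subset (fun v hv => ?_) |>.2 ⟨x, by simp [hx, hxy.symm], by simp [hx]⟩
  have hvx : v ≠ x := by rintro rfl; exact hv hx
  have hvy : v ≠ y := by rintro rfl; exact hv hy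
  simpa [hf.swap_apply_of_ne_of_ne hx hy hvx hvy] using hv

namespace SimpleGraph

variable {V : Type*} (G : SimpleGraph V)

/-- A matching of `G`, encoded by the involution exchanging each matched vertex with its partner
and fixing the unmatched vertices. -/
def IsMatchingInvolution (f : V → V) : Prop :=
  Function.Involutive f ∧ ∀ v, f v ≠ v → G.Adj v (f v)

def IsMaximalMatchingInvolution (f : V → V) : Prop :=
  G.IsMatchingInvolution f ∧ ∀ ⦃u v⦄, G.Adj u v → f u ≠ u ∨ f v ≠ v

def goodNonedgeFinset [Fintype V] [DecidableEq V] [DecidableRel G.Adj] : Finset (Finset V) :=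
  Finset.univ.filter fun p : Finset V =>
    p.card = 2 ∧ (∀ u ∈ p, ∀ v ∈ p, ¬ G.Adj u v) ∧ ∃ w : V, ∀ u ∈ p, G.Adj u w

variable {G}

lemma IsMatchingInvolution.swap_comp [DecidableEq V] {f : V → V}
    (hf : G.IsMatchingInvolution f) {x y : V} (hxy : G.Adj x y) (hx : f x = x) (hy : f y = y) :
    G.IsMatchingInvolution (Equiv.swap x y ∘ f) := by
  refine ⟨fun v => ?_, fun v hv => ?_⟩
  · by_cases hvx : v = x
    · subst hvx; simp [hx, hy]
    by_cases hvy : v = y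
    · subst hvy; simp [hx, hy]
    simp [hf.1.swap_apply_of_ne_of_ne hx hy hvx hvy, hf.1 v, Equiv.swap_apply_of_ne_of_ne hvx hvy]
  · by_cases hvx : v = x
    · subst hvx; simpa [hx] using hxy
    by_cases hvy : v = y
    · subst hvy; simpa [hy] using hxy.symm
    simp only [Function.comp_apply, hf.1.swap_apply_of_ne_of_ne hx hy hvx hvy] at hv ⊢
    exact hf.2 v hv

/-- A matching involution moving the most vertices is maximal: an edge between two of its fixed
points could be added to it. -/
theorem exists_isMaximalMatchingInvolution [Finite V] : ∃ f, G.IsMaximalMatchingInvolution f := by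
  classical
  obtain ⟨f, hf, hmax⟩ := Set.exists_max_image {f | G.IsMatchingInvolution f}
    (fun f => {v | f v ≠ v}.ncard) (Set.toFinite _) ⟨id, fun _ => rfl, fun _ h => (h rfl).elim⟩
  refine ⟨f, hf, fun u v huv => ?_⟩
  by_contra! h
  refine (hmax _ (hf.swap_comp huv h.1 h.2)).not_gt (Set.ncard_lt_ncard ?_ (Set.toFinite _))
  exact hf.1.setOf_ne_ssubset_setOf_swap_comp_ne huv.ne h.1 h.2

def matchingShift [DecidableEq V] (f : V → V) (q : V × V) : V × V :=
  if f q.2 = q.2 then (f q.1, q.2) else (q.1, f q.2)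

lemma matchingShift_involutive [DecidableEq V] {f : V → V} (hf : Function.Involutive f) :
    Function.Involutive (matchingShift f) := by
  rintro ⟨u, v⟩
  by_cases hv : f v = v
  · simp [matchingShift, hv, hf u]
  · simp [matchingShift, hv, hf v, Ne.symm hv]

lemma card_eq_two_of_mem_goodNonedgeFinset [Fintype V] [DecidableEq V] [DecidableRel G.Adj] {p : Finset V}
    (hp : p ∈ G.goodNonedgeFinset) : #p = 2 :=
  (mem_filter.1 hp).2.1

lemma pair_mem_goodNonedgeFinset [Fintype V] [DecidableEq V] [DecidableRel G.Adj]
    (htf : G.CliqueFree 3) {a b w : V} (hab : a ≠ b) (ha : G.Adj w a) (hb : G.Adj w b) :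
    {a, b} ∈ G.goodNonedgeFinset := by
  have hnadj : ¬G.Adj a b := isIndepSet_neighborSet_of_triangleFree G htf w ha hb hab
  simpa [goodNonedgeFinset, card_pair hab, hnadj, G.adj_comm b a] using ⟨w, ha.symm, hb.symm⟩

lemma pair_matchingShift_mem_goodNonedgeFinset [Fintype V] [DecidableEq V] [DecidableRel G.Adj]
    (htf : G.CliqueFree 3) {f : V → V} (hf : G.IsMaximalMatchingInvolution f) {u v : V}
    (huv : G.Adj u v) (hfu : f u ≠ v) :
    {(matchingShift f (u, v)).1, (matchingShift f (u, v)).2} ∈ G.goodNonedgeFinset := by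
  obtain ⟨⟨hinv, hadj⟩, hmax⟩ := hf
  by_cases hv : f v = v
  · have hu : f u ≠ u := (hmax huv).resolve_right (not_not.2 hv)
    simpa [matchingShift, hv] using pair_mem_goodNonedgeFinset htf hfu (hadj u hu) huv
  · have hne : u ≠ f v := fun h => hfu (by rw [h, hinv])
    simpa [matchingShift, hv] using pair_mem_goodNonedgeFinset htf hne huv.symm (hadj v hv)

theorem card_dart_le_card_add_card_filter_pair_mem_goodNonedgeFinset [Fintype V] [DecidableEq V]
    [DecidableRel G.Adj] (htf : G.CliqueFree 3) :
    Fintype.card G.Dart ≤ Fintype.card V + #{q : V × V | {q.1, q.2} ∈ G.goodNonedgeFinset} := by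
  obtain ⟨f, hf, hmax⟩ := exists_isMaximalMatchingInvolution (G := G)
  rw [← card_univ, ← card_filter_add_card_filter_not (fun d : G.Dart => f d.fst = d.snd)]
  gcongr
  · refine card_le_card_of_injOn (fun d : G.Dart => d.fst) (fun _ _ => mem_coe.2 (mem_univ _)) ?_
      |>.trans (card_univ (α := V)).le
    intro d hd d' hd' h
    simp only [coe_filter, mem_univ, true_and, Set.mem_ofPred_eq] at hd hd' h
    exact Dart.ext _ _ (Prod.ext h (by rw [← hd, ← hd', h]))
  · refine card_le_card_of_injOn (fun d => matchingShift f d.toProd) ?_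
      ((matchingShift_involutive hf.1).injective.comp Dart.toProd_injective).injOn
    intro d hd
    simp only [coe_filter, Set.mem_ofPred_eq] at hd ⊢
    exact ⟨mem_univ _, pair_matchingShift_mem_goodNonedgeFinset htf ⟨hf, hmax⟩ d.adj hd.2⟩

end SimpleGraph

/-- Lemma: if `G` is a triangle-free graph with `n` vertices and `m` edges, then `G` has at
least `m - n/2` good non-edges, where a non-edge `{u, v}` is good if `u` and `v` have a
common neighbor. -/
theorem triangle_free_good_nonedges
    {V : Type} [Fintype V] [DecidableEq V]
    (G : SimpleGraph V) [DecidableRel G.Adj]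
    (htf : G.CliqueFree 3) :
    (G.edgeFinset.card : ℝ) - (Fintype.card V : ℝ) / 2 ≤
      ((Finset.univ.filter (fun p : Finset V =>
        p.card = 2 ∧ (∀ u ∈ p, ∀ v ∈ p, ¬ G.Adj u v) ∧ ∃ w : V, ∀ u ∈ p, G.Adj u w)).card : ℝ) := by
  have hcount : 2 * #G.edgeFinset ≤ Fintype.card V + 2 * #G.goodNonedgeFinset := calc
    2 * #G.edgeFinset = Fintype.card G.Dart := G.dart_card_eq_twice_card_edges.symm
    _ ≤ Fintype.card V + #{q : V × V | {q.1, q.2} ∈ G.goodNonedgeFinset} :=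
      SimpleGraph.card_dart_le_card_add_card_filter_pair_mem_goodNonedgeFinset htf
    _ ≤ Fintype.card V + ∑ P ∈ G.goodNonedgeFinset, #P := by
      gcongr; exact card_filter_pair_mem_le_sum_card _
    _ = Fintype.card V + 2 * #G.goodNonedgeFinset := by
      rw [sum_congr rfl fun P hP => SimpleGraph.card_eq_two_of_mem_goodNonedgeFinset hP, sum_const,
        smul_eq_mul, mul_comm]
  have hcast : (2 * #G.edgeFinset : ℝ) ≤ Fintype.card V + 2 * #G.goodNonedgeFinset := by
    exact_mod_cast hcount
  change _ ≤ (#G.goodNonedgeFinset : ℝ)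
  linarith
end

section
/- If n < (3/2 + 1/4)·k = (7/4)k, then the generalized Kneser hypergraph KG^3_2(n, k) is T_5-free. -/
open Finset

/-- The hypergraph `T_5` with vertices `{0,1,2,3,4}` and edges
`{0,1,2}, {0,3,4}, {1,3,4}, {2,3,4}`. -/
def T5 : Finset (Finset (Fin 5)) := {{0, 1, 2}, {0, 3, 4}, {1, 3, 4}, {2, 3, 4}}

/-- The generalized Kneser hypergraph `KG^r_s(n, k)`. -/
def KG (r s n k : ℕ) : Finset (Finset (Finset (Fin n))) :=
  Finset.univ.filter (fun e => e.card = r ∧ (∀ A ∈ e, A.card = k) ∧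
    ∀ i : Fin n, (e.filter (fun A => i ∈ A)).card ≤ s)

/-- Lemma: if `n < (3/2 + 1/4)·k = (7/4)·k`, then `KG^3_2(n, k)` is `T_5`-free. -/
theorem generalized_kneser_T5_free (n k : ℕ) (h : 4 * n < 7 * k) :
    ¬ Embeds T5 (KG 3 2 n k) := by
  rintro ⟨f, hf, hmem⟩
  have himg : ∀ a b c : Fin 5, ({a, b, c} : Finset (Fin 5)).image f = {f a, f b, f c} := by
    intro a b c; simp [Finset.image_insert]
  have he1 := hmem {0,1,2} (by decide)
  have he2 := hmem {0,3,4} (by decide)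
  have he3 := hmem {1,3,4} (by decide)
  have he4 := hmem {2,3,4} (by decide)
  rw [himg] at he1 he2 he3 he4
  simp only [KG, Finset.mem_filter, Finset.mem_univ, true_and] at he1 he2 he3 he4
  -- cardinality of the sets
  have hc0 : (f 0).card = k := he1.2.1 _ (by simp)
  have hc1 : (f 1).card = k := he1.2.1 _ (by simp)
  have hc2 : (f 2).card = k := he1.2.1 _ (by simp)
  have hc3 : (f 3).card = k := he2.2.1 _ (by simp)
  have hc4 : (f 4).card = k := he2.2.1 _ (by simp)
  -- no point lies in all three sets of an edge
  have hcard3 : ∀ a b c : Fin 5, a ≠ b → a ≠ c → b ≠ c →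
      ({f a, f b, f c} : Finset (Finset (Fin n))).card = 3 := by
    intro a b c hab hac hbc
    rw [Finset.card_insert_of_notMem (by simp [hf.ne hab, hf.ne hac]),
      Finset.card_insert_of_notMem (by simp [hf.ne hbc]), Finset.card_singleton]
  have notall : ∀ a b c : Fin 5, a ≠ b → a ≠ c → b ≠ c →
      (∀ i : Fin n, (({f a, f b, f c} : Finset (Finset (Fin n))).filter
        (fun A => i ∈ A)).card ≤ 2) →
      ∀ i : Fin n, ¬(i ∈ f a ∧ i ∈ f b ∧ i ∈ f c) := by
    rintro a b c hab hac hbc hfil i ⟨h1, h2, h3⟩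
    have hle := hfil i
    rw [Finset.filter_true_of_mem (fun A hA => by
        simp only [Finset.mem_insert, Finset.mem_singleton] at hA
        rcases hA with rfl | rfl | rfl <;> assumption)] at hle
    rw [hcard3 a b c hab hac hbc] at hle
    omega
  have P012 := notall 0 1 2 (by decide) (by decide) (by decide) he1.2.2
  have P034 := notall 0 3 4 (by decide) (by decide) (by decide) he2.2.2
  have P134 := notall 1 3 4 (by decide) (by decide) (by decide) he3.2.2
  have P234 := notall 2 3 4 (by decide) (by decide) (by decide) he4.2.2
  set U : Finset (Fin n) := f 0 ∪ f 1 ∪ f 2 with hU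
  set B : Finset (Fin n) := f 3 ∩ f 4 with hB
  have hdisj : Disjoint U B := by
    rw [Finset.disjoint_left]
    intro i hiU hiB
    rw [hU] at hiU
    rw [hB, Finset.mem_inter] at hiB
    simp only [Finset.mem_union] at hiU
    rcases hiU with (h' | h') | h'
    · exact P034 i ⟨h', hiB.1, hiB.2⟩
    · exact P134 i ⟨h', hiB.1, hiB.2⟩
    · exact P234 i ⟨h', hiB.1, hiB.2⟩
  -- 3k ≤ 2|U|
  have hsub : ∀ j : Fin 5, f j ⊆ U → (f j).card = ∑ i ∈ U, if i ∈ f j then 1 else 0 := by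
    intro j hj
    rw [← Finset.card_filter]
    congr 1
    rw [Finset.filter_mem_eq_inter, Finset.inter_eq_right.mpr hj]
  have hsU : 3 * k ≤ 2 * U.card := by
    have e0 := hsub 0 (fun i hi => by simp [hU, hi])
    have e1 := hsub 1 (fun i hi => by simp [hU, hi])
    have e2 := hsub 2 (fun i hi => by simp [hU, hi])
    have hsum : (f 0).card + (f 1).card + (f 2).card ≤ 2 * U.card := by
      rw [e0, e1, e2, ← Finset.sum_add_distrib, ← Finset.sum_add_distrib]
      calc (∑ i ∈ U, ((if i ∈ f 0 then 1 else 0) + (if i ∈ f 1 then 1 else 0)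
              + (if i ∈ f 2 then 1 else 0)))
          ≤ ∑ _i ∈ U, 2 := by
            apply Finset.sum_le_sum
            intro i _
            by_cases h0 : i ∈ f 0 <;> by_cases h1 : i ∈ f 1 <;> by_cases h2 : i ∈ f 2 <;>
              simp [h0, h1, h2]
            exact absurd ⟨h0, h1, h2⟩ (P012 i)
        _ = 2 * U.card := by rw [Finset.sum_const, smul_eq_mul, mul_comm]
    rw [hc0, hc1, hc2] at hsum
    omega
  have hUB : U.card + B.card ≤ n := by
    have hle := Finset.card_le_univ (U ∪ B)
    rw [Finset.card_union_of_disjoint hdisj] at hle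
    simpa using hle
  have h34 : (f 3 ∪ f 4).card + B.card = (f 3).card + (f 4).card :=
    Finset.card_union_add_card_inter _ _
  have hun : (f 3 ∪ f 4).card ≤ n := by
    have := Finset.card_le_univ (f 3 ∪ f 4); simpa using this
  rw [hc3, hc4] at h34
  omega
end

section
/- If n < (3/2 + 1/10)·k = (8/5)k, then the generalized Kneser hypergraph KG^3_2(n, k) is S(7)-free, where S(7) denotes the Fano plane. -/
open Finset

/-- The Fano plane `S(7)`: the `3`-uniform hypergraph on `7` vertices whose edges are the
lines of the projective plane of order `2`. -/
def Fano : Finset (Finset (Fin 7)) :=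
  {{0, 1, 2}, {0, 3, 4}, {0, 5, 6}, {1, 3, 5}, {1, 4, 6}, {2, 3, 6}, {2, 4, 5}}

set_option maxRecDepth 100000 in
/-- Any set of Fano vertices meeting every line in at most `2` points has size at most `4`. -/
lemma fano_cap (S : Finset (Fin 7)) (h : ∀ e ∈ Fano, (S ∩ e).card ≤ 2) : S.card ≤ 4 := by
  revert h; revert S; decide

/-- Lemma: if `n < (3/2 + 1/10)·k = (8/5)·k`, then `KG^3_2(n, k)` is `S(7)`-free. -/
theorem generalized_kneser_fano_free (n k : ℕ) (h : 5 * n < 8 * k) :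
    ¬ Embeds Fano (KG 3 2 n k) := by
  rintro ⟨f, hfinj, hf⟩
  have hcard : ∀ v : Fin 7, (f v).card = k := by
    intro v
    have hv : ∃ e ∈ Fano, v ∈ e := by revert v; decide
    obtain ⟨e, he, hve⟩ := hv
    have hKG := hf e he
    simp only [KG, mem_filter, mem_univ, true_and] at hKG
    exact hKG.2.1 _ (mem_image_of_mem f hve)
  have key : ∀ x : Fin n, (univ.filter (fun v => x ∈ f v)).card ≤ 4 := by
    intro x
    refine fano_cap _ (fun e he => ?_)
    have hKG := hf e he
    simp only [KG, mem_filter, mem_univ, true_and] at hKG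
    have h3 := hKG.2.2 x
    have hsub : (e.filter (fun v => x ∈ f v)).image f ⊆
        (e.image f).filter (fun A => x ∈ A) := by
      intro A hA
      simp only [mem_image, mem_filter] at hA ⊢
      obtain ⟨v, hv, rfl⟩ := hA
      exact ⟨⟨v, hv.1, rfl⟩, hv.2⟩
    have hle : (e.filter (fun v => x ∈ f v)).card ≤ 2 := by
      rw [← Finset.card_image_of_injective _ hfinj]
      exact le_trans (Finset.card_le_card hsub) h3
    calc ((univ.filter (fun v => x ∈ f v)) ∩ e).card
        = (e.filter (fun v => x ∈ f v)).card := by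
          congr 1; ext v; simp [and_comm]
      _ ≤ 2 := hle
  have hsum : 7 * k = ∑ x : Fin n, (univ.filter (fun v => x ∈ f v)).card := by
    calc 7 * k = ∑ v : Fin 7, (f v).card := by simp [hcard, mul_comm]
      _ = ∑ v : Fin 7, ∑ x : Fin n, (if x ∈ f v then 1 else 0) := by
          refine Finset.sum_congr rfl fun v _ => ?_
          rw [← Finset.card_filter]
          congr 1
          ext x; simp
      _ = ∑ x : Fin n, ∑ v : Fin 7, (if x ∈ f v then 1 else 0) := Finset.sum_comm
      _ = ∑ x : Fin n, (univ.filter (fun v => x ∈ f v)).card := by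
          refine Finset.sum_congr rfl fun x _ => ?_
          rw [Finset.card_filter]
  have hbound : ∑ x : Fin n, (univ.filter (fun v => x ∈ f v)).card ≤ 4 * n := by
    calc ∑ x : Fin n, (univ.filter (fun v => x ∈ f v)).card
        ≤ ∑ _x : Fin n, 4 := Finset.sum_le_sum fun x _ => key x
      _ = 4 * n := by simp [mul_comm]
  omega
end

section
/- The chromatic threshold of the family of S(7)-free 3-uniform hypergraphs is at least 9/17, where S(7) denotes the Fano plane; that is, for every t ≥ 2 and ε > 0 there exist arbitrarily large S(7)-free 3-uniform hypergraphs H with χ(H) ≥ t and δ(H) ≥ (9/17 − ε)·C(|V(H)|, 2). -/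
open Finset

/-!
Blow up the `3`-uniform shift graph `Sh(N)` on `[N]²`, whose edges are the chains
`{(i,j), (j,k), (k,l)}` with `i < j < k < l`: add three classes `Y₀, Y₁, Y₂` of `K` new vertices,
and as further edges take the triples made of one pair and two new vertices from distinct
classes, and the triples of new vertices meeting both `Y₀` and `Y₁ ∪ Y₂`.

For `K ≫ N²` a pair has degree about `3K²` and a new vertex at least about `5K²/2`, both more
than `9/17 · C(3K, 2)`. The blow-up contains `Sh(N)`, which needs more than `log₄ N` colours.
A copy of the Fano plane cannot use a new vertex (a finite check on the labels of its seven
lines), and `Sh(N)` itself is Fano-free.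
-/

theorem Fano.exists_mem_mem (a b : Fin 7) : ∃ e ∈ Fano, a ∈ e ∧ b ∈ e := by
  revert a b; decide

theorem Fano.exists_inter_eq_singleton (a : Fin 7) :
    ∃ e₁ ∈ Fano, ∃ e₂ ∈ Fano, e₁ ∩ e₂ = {a} := by
  revert a; decide

section ShiftGraph

variable {α : Type} [LinearOrder α]

def IsShiftEdge (e : Finset (α × α)) : Prop :=
  ∃ i j k l : α, i < j ∧ j < k ∧ k < l ∧ e = {(i, j), (j, k), (k, l)}

open Classical in
noncomputable def shiftGraph (α : Type) [Fintype α] [LinearOrder α] : Finset (Finset (α × α)) :=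
  univ.filter IsShiftEdge

theorem mem_shiftGraph [Fintype α] {e : Finset (α × α)} : e ∈ shiftGraph α ↔ IsShiftEdge e := by
  simp [shiftGraph]

namespace IsShiftEdge

variable {e : Finset (α × α)} {p q : α × α}

theorem card_eq_three (he : IsShiftEdge e) : e.card = 3 := by
  obtain ⟨i, j, k, l, hij, hjk, hkl, rfl⟩ := he
  refine Finset.card_eq_three.2 ⟨_, _, _, ?_, ?_, ?_, rfl⟩ <;>
    · intro h; simp only [Prod.mk.injEq] at h; order

theorem fst_lt_snd (he : IsShiftEdge e) (hp : p ∈ e) : p.1 < p.2 := by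
  obtain ⟨i, j, k, l, hij, hjk, hkl, rfl⟩ := he
  simp only [mem_insert, mem_singleton] at hp
  rcases hp with rfl | rfl | rfl <;> assumption

theorem eq_of_fst_eq (he : IsShiftEdge e) (hp : p ∈ e) (hq : q ∈ e) (h : p.1 = q.1) : p = q := by
  obtain ⟨i, j, k, l, hij, hjk, hkl, rfl⟩ := he
  simp only [mem_insert, mem_singleton] at hp hq
  rcases hp with rfl | rfl | rfl <;> rcases hq with rfl | rfl | rfl <;>
    first | rfl | (exfalso; simp only at h; order)

theorem exists_fst_eq_snd (he : IsShiftEdge e) (hp : p ∈ e) (hmin : ∀ q ∈ e, p.1 ≤ q.1) :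
    ∃ q ∈ e, q.1 = p.2 := by
  obtain ⟨i, j, k, l, hij, hjk, hkl, rfl⟩ := he
  simp only [mem_insert, mem_singleton, forall_eq_or_imp, forall_eq] at hp hmin
  rcases hp with rfl | rfl | rfl
  · exact ⟨(j, k), by simp⟩
  · exfalso; order
  · exfalso; order

end IsShiftEdge

/-- Along a copy of the Fano plane, the first coordinate would be injective (any two points are
collinear), and the point `p` minimising it would have its second coordinate appear as a first
coordinate on each of two lines through `p` meeting only in `p`. -/
theorem not_embeds_fano_shiftGraph [Fintype α] : ¬ Embeds Fano (shiftGraph α) := by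
  rintro ⟨f, hf, hFano⟩
  have hedge : ∀ e ∈ Fano, IsShiftEdge (e.image f) := fun e he => mem_shiftGraph.1 (hFano e he)
  have hfst : Function.Injective fun a => (f a).1 := by
    intro a b hab
    obtain ⟨e, he, ha, hb⟩ := Fano.exists_mem_mem a b
    exact hf ((hedge e he).eq_of_fst_eq (mem_image_of_mem f ha) (mem_image_of_mem f hb) hab)
  obtain ⟨a, -, hmin⟩ := exists_min_image univ (fun a => (f a).1) univ_nonempty
  have hsnd : ∀ e ∈ Fano, a ∈ e → ∃ b ∈ e, (f b).1 = (f a).2 := by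
    intro e he ha
    obtain ⟨q, hq, hqa⟩ := (hedge e he).exists_fst_eq_snd (mem_image_of_mem f ha)
      (by simpa using fun b _ => hmin b (mem_univ b))
    obtain ⟨b, hb, rfl⟩ := mem_image.1 hq
    exact ⟨b, hb, hqa⟩
  obtain ⟨e₁, he₁, e₂, he₂, h⟩ := Fano.exists_inter_eq_singleton a
  have ha : a ∈ e₁ ∩ e₂ := h ▸ mem_singleton_self a
  obtain ⟨b₁, hb₁, hb₁a⟩ := hsnd e₁ he₁ (mem_inter.1 ha).1
  obtain ⟨b₂, hb₂, hb₂a⟩ := hsnd e₂ he₂ (mem_inter.1 ha).2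
  have hb : b₁ = a := by
    have : b₁ = b₂ := hfst (hb₁a.trans hb₂a.symm)
    rw [← mem_singleton, ← h]
    exact mem_inter.2 ⟨hb₁, this ▸ hb₂⟩
  subst hb
  exact (hedge e₁ he₁).fst_lt_snd (mem_image_of_mem f hb₁) |>.ne hb₁a

end ShiftGraph

section ShiftColoring

variable {α β : Type} [LinearOrder α] [Fintype α] [Fintype β] [DecidableEq β]

/-- `i ↦ {ψ i j | i < j}` is injective. -/
theorem card_le_two_pow_of_shift_coloring (ψ : α → α → β)
    (hψ : ∀ i j k, i < j → j < k → ψ i j ≠ ψ j k) : Fintype.card α ≤ 2 ^ Fintype.card β := by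
  set U : α → Finset β := fun i => (univ.filter (i < ·)).image (ψ i)
  have hU : ∀ i j, i < j → U i ≠ U j := by
    intro i j hij hUij
    have : ψ i j ∈ U j := hUij ▸ mem_image_of_mem _ (mem_filter.2 ⟨mem_univ j, hij⟩)
    obtain ⟨k, hk, hjk⟩ := mem_image.1 this
    exact hψ i j k hij (mem_filter.1 hk).2 hjk.symm
  have hinj : Function.Injective U := by
    intro i j hij
    by_contra hne
    rcases lt_or_gt_of_ne hne with h | h
    exacts [hU i j h hij, hU j i h hij.symm]
  simpa [Fintype.card_finset] using Fintype.card_le_of_injective U hinj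

/-- Recording with the colour `φ i j` whether `(j, k)` has the same colour for some `k > j`
turns a colouring of the `3`-uniform shift graph into a proper colouring of the graph shift
graph. -/
theorem card_le_four_pow_of_shift_coloring (φ : α → α → β)
    (hφ : ∀ i j k l, i < j → j < k → k < l → ¬ (φ i j = φ j k ∧ φ j k = φ k l)) :
    Fintype.card α ≤ 4 ^ Fintype.card β := by
  classical
  set ψ : α → α → β × Bool := fun i j => (φ i j, decide (∃ k, j < k ∧ φ j k = φ i j))
  have hψ : ∀ i j k, i < j → j < k → ψ i j ≠ ψ j k := by
    intro i j k hij hjk h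
    have hcol : φ i j = φ j k := congrArg Prod.fst h
    have hbit := congrArg Prod.snd h
    simp only [ψ, decide_eq_decide] at hbit
    obtain ⟨l, hkl, hl⟩ := hbit.1 ⟨k, hjk, hcol.symm⟩
    exact hφ i j k l hij hjk hkl ⟨hcol, hl.symm⟩
  have := card_le_two_pow_of_shift_coloring ψ hψ
  rwa [Fintype.card_prod, Fintype.card_bool, pow_mul'] at this

theorem card_le_four_pow_of_chromAtMost_shiftGraph {c : ℕ}
    (h : ChromAtMost (shiftGraph α) c) : Fintype.card α ≤ 4 ^ c := by
  obtain ⟨f, hf⟩ := h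
  refine (card_le_four_pow_of_shift_coloring (fun i j => f (i, j)) ?_).trans_eq (by simp)
  intro i j k l hij hjk hkl hmono
  obtain ⟨x, hx, y, hy, hxy⟩ := hf _ (mem_shiftGraph.2 ⟨i, j, k, l, hij, hjk, hkl, rfl⟩)
  simp only [mem_insert, mem_singleton] at hx hy
  rcases hx with rfl | rfl | rfl <;> rcases hy with rfl | rfl | rfl <;> simp_all

end ShiftColoring

section Counting

variable {V : Type} [DecidableEq V]

theorem card_le_card_filter_mem {H P : Finset (Finset V)} {v : V}
    (hP : ∀ s ∈ P, v ∉ s ∧ insert v s ∈ H) : P.card ≤ (H.filter (v ∈ ·)).card := by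
  refine card_le_card_of_injOn (insert v) (fun s hs => ?_) fun s hs t ht hst => ?_
  · exact mem_filter.2 ⟨(hP s hs).2, mem_insert_self v s⟩
  · rw [← erase_insert (hP s hs).1, ← erase_insert (hP t ht).1]
    exact congrArg (·.erase v) hst

theorem choose_le_card_filter_add_sum {ι : Type} (s : Finset V) (t : ι → Finset V)
    (I : Finset ι) (k : ℕ) :
    s.card.choose k ≤ ((s.powersetCard k).filter fun u => ∀ i ∈ I, ¬ u ⊆ t i).card +
      ∑ i ∈ I, (s ∩ t i).card.choose k := by
  rw [← card_powersetCard, ← card_filter_add_card_filter_not (fun u => ∀ i ∈ I, ¬ u ⊆ t i)]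
  gcongr
  calc _ ≤ (I.biUnion fun i => (s ∩ t i).powersetCard k).card := by
        refine card_le_card fun u hu => ?_
        simp only [mem_filter, mem_powersetCard, not_forall, not_not] at hu
        obtain ⟨⟨hus, huk⟩, i, hi, hut⟩ := hu
        exact mem_biUnion.2 ⟨i, hi, mem_powersetCard.2 ⟨subset_inter hus hut, huk⟩⟩
    _ ≤ _ := card_biUnion_le
    _ = _ := by simp only [card_powersetCard]

end Counting

theorem nine_div_seventeen_mul_choose_add_three_mul_choose_le {M K : ℕ}
    (hK : 100 * (M + 1) ≤ K) :
    9 / 17 * ((M + 3 * K).choose 2 : ℝ) + 3 * (K.choose 2 : ℝ) ≤ (3 * K).choose 2 := by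
  have hK' : (100 * (M + 1) : ℝ) ≤ K := by exact_mod_cast hK
  simp only [Nat.cast_choose_two]
  push_cast
  nlinarith [mul_le_mul_of_nonneg_right hK' (Nat.cast_nonneg K : (0 : ℝ) ≤ K)]

theorem nine_div_seventeen_mul_choose_add_choose_le {M K : ℕ} (hK : 100 * (M + 1) ≤ K) :
    9 / 17 * ((M + 3 * K).choose 2 : ℝ) + ((2 * K - 1).choose 2 : ℝ) ≤ (3 * K - 1).choose 2 := by
  have hK' : (100 * (M + 1) : ℝ) ≤ K := by exact_mod_cast hK
  simp only [Nat.cast_choose_two]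
  push_cast [Nat.cast_sub (by omega : 1 ≤ 2 * K), Nat.cast_sub (by omega : 1 ≤ 3 * K)]
  nlinarith [mul_le_mul_of_nonneg_right hK' (Nat.cast_nonneg K : (0 : ℝ) ≤ K)]

section Blowup

variable {α β : Type}

def blowupLabel : α ⊕ Fin 3 × β → Fin 4 :=
  Sum.elim (fun _ => 3) fun y => y.1.castSucc

def MixedLabels (L : Finset (Fin 4)) : Prop :=
  (3 ∈ L ∧ L.card = 3) ∨ (3 ∉ L ∧ 0 ∈ L ∧ 2 ≤ L.card)

instance (L : Finset (Fin 4)) : Decidable (MixedLabels L) := by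
  unfold MixedLabels; infer_instance

def AdmissibleLabels (L : Finset (Fin 4)) : Prop :=
  L ⊆ {3} ∨ MixedLabels L

instance (L : Finset (Fin 4)) : Decidable (AdmissibleLabels L) := by
  unfold AdmissibleLabels; infer_instance

theorem not_mixedLabels_of_subset {L : Finset (Fin 4)} (h : L ⊆ {3}) : ¬ MixedLabels L := by
  rintro (⟨-, hL⟩ | ⟨-, h0, -⟩)
  · have := card_le_card h
    simp [hL] at this
  · exact absurd (h h0) (by decide)

set_option synthInstance.maxSize 4000 in
theorem Fano.eq_three_of_forall_admissibleLabels (c : Fin 7 → Fin 4)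
    (hc : ∀ e ∈ Fano, AdmissibleLabels (e.image c)) (i : Fin 7) : c i = 3 := by
  have key : ∀ x₀ x₁ x₂ x₃ x₄ x₅ x₆ : Fin 4,
      AdmissibleLabels {x₀, x₁, x₂} → AdmissibleLabels {x₀, x₃, x₄} →
      AdmissibleLabels {x₀, x₅, x₆} → AdmissibleLabels {x₁, x₃, x₅} →
      AdmissibleLabels {x₁, x₄, x₆} → AdmissibleLabels {x₂, x₃, x₆} →
      AdmissibleLabels {x₂, x₄, x₅} →
      x₀ = 3 ∧ x₁ = 3 ∧ x₂ = 3 ∧ x₃ = 3 ∧ x₄ = 3 ∧ x₅ = 3 ∧ x₆ = 3 := by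
    decide
  simp only [Fano, mem_insert, mem_singleton, forall_eq_or_imp, forall_eq, image_insert,
    image_singleton] at hc
  obtain ⟨h₀, h₁, h₂, h₃, h₄, h₅, h₆⟩ :=
    key _ _ _ _ _ _ _ hc.1 hc.2.1 hc.2.2.1 hc.2.2.2.1 hc.2.2.2.2.1 hc.2.2.2.2.2.1 hc.2.2.2.2.2.2
  fin_cases i <;> assumption

theorem image_blowupLabel_map_inl_subset (s : Finset α) :
    (s.map .inl).image (blowupLabel (β := β)) ⊆ {3} := by
  intro x hx
  obtain ⟨_, ha, rfl⟩ := mem_image.1 hx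
  obtain ⟨a, -, rfl⟩ := mem_map.1 ha
  exact mem_singleton_self _

variable [DecidableEq α] [Fintype α]

/-- The edges of `S` on `α`; the triples with one vertex in `α` and two in distinct classes
`{i} × β`; and the triples in `Fin 3 × β` meeting class `0` and another class. -/
def blowup (S : Finset (Finset α)) (β : Type) [DecidableEq β] [Fintype β] :
    Finset (Finset (α ⊕ Fin 3 × β)) :=
  S.map (mapEmbedding .inl).toEmbedding ∪
    (univ.powersetCard 3).filter fun e => MixedLabels (e.image blowupLabel)

variable [DecidableEq β] [Fintype β] {S : Finset (Finset α)}

theorem admissibleLabels_of_mem_blowup {e : Finset (α ⊕ Fin 3 × β)} (he : e ∈ blowup S β) :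
    AdmissibleLabels (e.image blowupLabel) := by
  rcases mem_union.1 he with he | he
  · obtain ⟨s, -, rfl⟩ := mem_map.1 he
    exact Or.inl (image_blowupLabel_map_inl_subset s)
  · exact Or.inr (mem_filter.1 he).2

theorem map_inl_mem_blowup_iff {s : Finset α} :
    s.map .inl ∈ blowup S β ↔ s ∈ S := by
  refine ⟨fun hs => ?_, fun hs => mem_union_left _ (mem_map_of_mem _ hs)⟩
  rcases mem_union.1 hs with hs | hs
  · exact (mem_map' _).1 hs
  · exact absurd (mem_filter.1 hs).2
      (not_mixedLabels_of_subset (image_blowupLabel_map_inl_subset s))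

theorem card_eq_three_of_mem_blowup (hS : ∀ e ∈ S, e.card = 3) {e : Finset (α ⊕ Fin 3 × β)}
    (he : e ∈ blowup S β) : e.card = 3 := by
  rcases mem_union.1 he with he | he
  · obtain ⟨s, hs, rfl⟩ := mem_map.1 he
    simpa using hS s hs
  · exact (mem_powersetCard_univ.1 (mem_filter.1 he).1)

theorem embeds_fano_of_embeds_fano_blowup (h : Embeds Fano (blowup S β)) : Embeds Fano S := by
  obtain ⟨f, hf, hFano⟩ := h
  have hlabel : ∀ i, blowupLabel (f i) = 3 :=
    Fano.eq_three_of_forall_admissibleLabels (blowupLabel ∘ f) fun e he => by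
      simpa only [image_image] using admissibleLabels_of_mem_blowup (hFano e he)
  have hinl : ∀ i, ∃ a, f i = .inl a := by
    intro i
    have := hlabel i
    rcases hfi : f i with a | y
    · exact ⟨a, rfl⟩
    · rw [hfi] at this
      exact absurd this (Fin.castSucc_lt_last y.1).ne
  choose g hg using hinl
  have hfg : f = Sum.inl ∘ g := funext hg
  subst hfg
  refine ⟨g, hf.of_comp, fun e he => (map_inl_mem_blowup_iff (β := β)).1 ?_⟩
  rw [map_eq_image, image_image]
  exact hFano e he

theorem chromAtMost_of_chromAtMost_blowup {k : ℕ} (h : ChromAtMost (blowup S β) k) :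
    ChromAtMost S k := by
  obtain ⟨f, hf⟩ := h
  refine ⟨f ∘ .inl, fun e he => ?_⟩
  obtain ⟨x, hx, y, hy, hxy⟩ := hf _ (map_inl_mem_blowup_iff.2 he)
  obtain ⟨a, ha, rfl⟩ := mem_map.1 hx
  obtain ⟨b, hb, rfl⟩ := mem_map.1 hy
  exact ⟨a, ha, b, hb, hxy⟩

theorem insert_inl_mem_blowup (a : α) {x y : Fin 3 × β} (hxy : x.1 ≠ y.1) :
    ({.inl a, .inr x, .inr y} : Finset (α ⊕ Fin 3 × β)) ∈ blowup S β := by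
  have hlabels : ∀ i j : Fin 3, i ≠ j → MixedLabels {3, i.castSucc, j.castSucc} := by decide
  refine mem_union_right _ (mem_filter.2 ⟨mem_powersetCard_univ.2 ?_, ?_⟩)
  · refine card_eq_three.2 ⟨_, _, _, Sum.inl_ne_inr, Sum.inl_ne_inr, ?_, rfl⟩
    exact fun h => hxy (congrArg Prod.fst (Sum.inr_injective h))
  · simpa [blowupLabel] using hlabels _ _ hxy

theorem insert_inr_mem_blowup {v x y : Fin 3 × β} (hvx : v.1 ≠ x.1) (h0 : v.1 = 0 ∨ x.1 = 0)
    (hyv : y ≠ v) (hyx : y ≠ x) :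
    ({.inr v, .inr x, .inr y} : Finset (α ⊕ Fin 3 × β)) ∈ blowup S β := by
  have hlabels : ∀ i j k : Fin 3, i ≠ j → (i = 0 ∨ j = 0) →
      MixedLabels {i.castSucc, j.castSucc, k.castSucc} := by decide
  refine mem_union_right _ (mem_filter.2 ⟨mem_powersetCard_univ.2 ?_, ?_⟩)
  · refine card_eq_three.2 ⟨_, _, _, ?_, ?_, ?_, rfl⟩ <;> simp only [ne_eq, Sum.inr.injEq]
    · exact fun h => hvx (congrArg Prod.fst h)
    · exact Ne.symm hyv
    · exact Ne.symm hyx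
  · simpa [blowupLabel] using hlabels _ _ y.1 hvx h0

theorem choose_le_card_filter_inl_mem_blowup (a : α) :
    (3 * Fintype.card β).choose 2 ≤
      ((blowup S β).filter (.inl a ∈ ·)).card + 3 * (Fintype.card β).choose 2 := by
  have hcount := choose_le_card_filter_add_sum (univ : Finset (Fin 3 × β))
    (fun i => {i} ×ˢ univ) univ 2
  simp only [card_univ, Fintype.card_prod, Fintype.card_fin, univ_inter, card_product,
    card_singleton, one_mul, sum_const, smul_eq_mul] at hcount
  refine hcount.trans (Nat.add_le_add_right ?_ _)
  rw [← card_map (mapEmbedding .inr).toEmbedding]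
  refine card_le_card_filter_mem fun s hs => ?_
  obtain ⟨u, hu, rfl⟩ := mem_map.1 hs
  simp only [mem_filter, mem_powersetCard] at hu
  obtain ⟨⟨-, hu2⟩, hclass⟩ := hu
  obtain ⟨x, y, -, rfl⟩ := card_eq_two.1 hu2
  have hxy : x.1 ≠ y.1 := fun h => hclass x.1 (mem_univ _) (by
    intro z hz
    simp only [mem_insert, mem_singleton] at hz
    rcases hz with rfl | rfl <;> simp only [mem_product, mem_singleton, mem_univ, and_true, h])
  refine ⟨by simp, ?_⟩
  simpa using insert_inl_mem_blowup (S := S) a hxy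

theorem choose_le_card_filter_inr_mem_blowup (v : Fin 3 × β) :
    (3 * Fintype.card β - 1).choose 2 ≤
      ((blowup S β).filter (.inr v ∈ ·)).card + (2 * Fintype.card β - 1).choose 2 := by
  -- the pairs meeting class `j` span edges with `v`
  set j : Fin 3 := if v.1 = 0 then 1 else 0
  have hj : v.1 ≠ j ∧ (v.1 = 0 ∨ j = 0) := by by_cases h : v.1 = 0 <;> simp [j, h]
  set T : Finset (Fin 3 × β) := ({j} ×ˢ univ)ᶜ
  have hT : ∀ x, x ∈ T ↔ x.1 ≠ j := by
    simp only [T, mem_compl, mem_product, mem_singleton, mem_univ, and_true, implies_true]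
  have hvT : v ∈ T := (hT v).2 hj.1
  have hcount := choose_le_card_filter_add_sum (univ.erase v) (fun _ => T) {j} 2
  rw [sum_singleton, erase_inter, univ_inter, card_erase_of_mem hvT, card_compl,
    card_erase_of_mem (mem_univ v), card_univ] at hcount
  simp only [Fintype.card_prod, Fintype.card_fin, card_product, card_singleton, card_univ,
    one_mul, mem_singleton, forall_eq] at hcount
  rw [show 3 * Fintype.card β - Fintype.card β = 2 * Fintype.card β by omega] at hcount
  refine hcount.trans (Nat.add_le_add_right ?_ _)
  rw [← card_map (mapEmbedding .inr).toEmbedding]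
  refine card_le_card_filter_mem fun s hs => ?_
  obtain ⟨u, hu, rfl⟩ := mem_map.1 hs
  simp only [mem_filter, mem_powersetCard] at hu
  obtain ⟨⟨huv, hu2⟩, huT⟩ := hu
  have hvu : v ∉ u := fun h => notMem_erase v univ (huv h)
  refine ⟨fun h => hvu ((mem_map' _).1 h), ?_⟩
  obtain ⟨x, hx, hxT⟩ := not_subset.1 huT
  have hxj : x.1 = j := not_not.1 (mt (hT x).2 hxT)
  obtain ⟨y, hy⟩ := card_eq_one.1 (by rw [card_erase_of_mem hx, hu2] : (u.erase x).card = 1)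
  have hyu : y ∈ u.erase x := hy ▸ mem_singleton_self y
  rw [← insert_erase hx, hy]
  simpa using insert_inr_mem_blowup (S := S) (hxj ▸ hj.1) (hxj ▸ hj.2)
    (ne_of_mem_of_not_mem (mem_of_mem_erase hyu) hvu) (ne_of_mem_erase hyu)

theorem nine_div_seventeen_mul_choose_le_card_filter_mem_blowup
    (hβ : 100 * (Fintype.card α + 1) ≤ Fintype.card β) (v : α ⊕ Fin 3 × β) :
    9 / 17 * ((Fintype.card α + 3 * Fintype.card β).choose 2 : ℝ) ≤
      ((blowup S β).filter (v ∈ ·)).card := by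
  rcases v with a | y
  · have hdeg :=
      (Nat.cast_le (α := ℝ)).2 (choose_le_card_filter_inl_mem_blowup (S := S) (β := β) a)
    push_cast at hdeg
    linarith [nine_div_seventeen_mul_choose_add_three_mul_choose_le hβ]
  · have hdeg := (Nat.cast_le (α := ℝ)).2 (choose_le_card_filter_inr_mem_blowup (S := S) y)
    push_cast at hdeg
    linarith [nine_div_seventeen_mul_choose_add_choose_le hβ]

end Blowup

section Transport

variable {V V' : Type} (e : V ≃ V') {H : Finset (Finset V)}

theorem ChromAtMost.of_map_finsetCongr {k : ℕ}
    (h : ChromAtMost (H.map e.finsetCongr.toEmbedding) k) : ChromAtMost H k := by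
  obtain ⟨c, hc⟩ := h
  refine ⟨c ∘ e, fun s hs => ?_⟩
  obtain ⟨x, hx, y, hy, hxy⟩ := hc _ (mem_map_of_mem _ hs)
  simp only [Equiv.coe_toEmbedding, Equiv.finsetCongr_apply, mem_map_equiv] at hx hy
  exact ⟨e.symm x, hx, e.symm y, hy, by simpa using hxy⟩

variable [DecidableEq V] [DecidableEq V']

theorem Embeds.of_map_finsetCongr {γ : Type} {F : Finset (Finset γ)}
    (h : Embeds F (H.map e.finsetCongr.toEmbedding)) : Embeds F H := by
  obtain ⟨f, hf, hF⟩ := h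
  refine ⟨e.symm ∘ f, e.symm.injective.comp hf, fun s hs => ?_⟩
  have := mem_map_equiv.1 (hF s hs)
  rwa [Equiv.finsetCongr_symm, Equiv.finsetCongr_apply, map_eq_image, image_image] at this

theorem card_filter_mem_map_finsetCongr (v : V) :
    ((H.map e.finsetCongr.toEmbedding).filter (e v ∈ ·)).card = (H.filter (v ∈ ·)).card := by
  rw [filter_map, card_map]
  congr 1
  ext s
  simp

end Transport

theorem fano_chromatic_threshold_lower_bound_general
    (t : ℕ) (ε : ℝ) (hε : 0 < ε) (N₀ : ℕ) :
    ∃ n : ℕ, N₀ ≤ n ∧ ∃ G : Finset (Finset (Fin n)),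
      (∀ e ∈ G, e.card = 3) ∧
      ¬ Embeds Fano G ∧
      ¬ ChromAtMost G (t - 1) ∧
      (∀ v : Fin n, (9 / 17 - ε) * (n.choose 2 : ℝ) ≤ ((G.filter (fun e => v ∈ e)).card : ℝ)) := by
  set N := 4 ^ (t - 1) + 1
  set K := 100 * (N * N + 1) + N₀
  have hcard : Fintype.card (Fin N × Fin N ⊕ Fin 3 × Fin K) = N * N + 3 * K := by simp
  set e := (Fintype.equivFin _).trans (finCongr hcard)
  refine ⟨_, by omega, (blowup (shiftGraph (Fin N)) (Fin K)).map e.finsetCongr.toEmbedding,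
    fun s hs => ?_, fun h => ?_, fun h => ?_, fun v => ?_⟩
  · obtain ⟨s, hsH, rfl⟩ := mem_map.1 hs
    simpa using card_eq_three_of_mem_blowup (fun _ he => (mem_shiftGraph.1 he).card_eq_three) hsH
  · exact not_embeds_fano_shiftGraph (embeds_fano_of_embeds_fano_blowup h.of_map_finsetCongr)
  · have := card_le_four_pow_of_chromAtMost_shiftGraph
      (chromAtMost_of_chromAtMost_blowup h.of_map_finsetCongr)
    simp [N] at this
  · have hdeg := nine_div_seventeen_mul_choose_le_card_filter_mem_blowup (S := shiftGraph (Fin N))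
      (by simp; omega) (e.symm v)
    rw [← e.apply_symm_apply v, card_filter_mem_map_finsetCongr]
    simp only [Fintype.card_prod, Fintype.card_fin] at hdeg
    nlinarith [(Nat.cast_nonneg _ : (0 : ℝ) ≤ ((N * N + 3 * K).choose 2 : ℕ))]

/-- Proposition: the chromatic threshold of the family of `S(7)`-free `3`-uniform
hypergraphs is at least `9/17`: for every `t ≥ 2` and `ε > 0`, there exist arbitrarily large
`S(7)`-free `3`-uniform hypergraphs `G` with `χ(G) ≥ t` (i.e. not `(t-1)`-colorable) and
minimum degree at least `(9/17 - ε)·C(n, 2)`. -/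
theorem fano_chromatic_threshold_lower_bound
    (t : ℕ) (ht : 2 ≤ t) (ε : ℝ) (hε : 0 < ε) (N₀ : ℕ) :
    ∃ n : ℕ, N₀ ≤ n ∧ ∃ G : Finset (Finset (Fin n)),
      (∀ e ∈ G, e.card = 3) ∧
      ¬ Embeds Fano G ∧
      ¬ ChromAtMost G (t - 1) ∧
      (∀ v : Fin n, (9 / 17 - ε) * (n.choose 2 : ℝ) ≤ ((G.filter (fun e => v ∈ e)).card : ℝ)) :=
  fano_chromatic_threshold_lower_bound_general t ε hε N₀
end
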